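/- arXiv:1601.05202 — 4 statements merged into one kernel-verified Lean document; each statement's English description precedes it below -/
import Mathlib

section
/- Let (Ω,F,P) be a probability space with filtration (F_t)_{t=0}^T, let N denote the space of adapted processes x = (x_0,…,x_T) with x_t ∈ L⁰(F_t; ℝ^{n_t}), and N^⊥ = {v ∈ L¹ : E(z·v) = 0 for all bounded adapted z}. Let h be a convex normal integrand on ℝⁿ × Ω (n = n_0+…+n_T). If x ∈ N satisfies E[h(x)] < ∞ and v ∈ N^⊥ satisfies E[h*(v)] < ∞, then E(x·v) = 0. -/
open MeasureTheory
open scoped ENNReal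

/-- Positive part of an extended real as an `ℝ≥0∞`. -/
noncomputable def epos (x : EReal) : ℝ≥0∞ := if x = ⊤ then ⊤ else ENNReal.ofReal x.toReal

/-- Expectation of an extended-real function: `+∞` unless the positive part is integrable. -/
noncomputable def eexp {Ω : Type*} [MeasurableSpace Ω] (μ : Measure Ω) (f : Ω → EReal) : EReal :=
  if ∫⁻ ω, epos (f ω) ∂μ = ⊤ then ⊤
  else ((∫⁻ ω, epos (f ω) ∂μ : ℝ≥0∞) : EReal) - ((∫⁻ ω, epos (-(f ω)) ∂μ : ℝ≥0∞) : EReal)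

lemma eexp_ne_top {Ω : Type*} [MeasurableSpace Ω] (μ : Measure Ω) (f : Ω → EReal)
    (h : eexp μ f ≠ ⊤) : ∫⁻ ω, epos (f ω) ∂μ ≠ ⊤ := by
  intro htop
  rw [eexp, if_pos htop] at h
  exact h rfl

section KL
lemma integral_bdd_mul_condexp {Ω : Type*} {mF : MeasurableSpace Ω} {μ : Measure Ω}
    [IsFiniteMeasure μ] {m : MeasurableSpace Ω} (hm : m ≤ mF) {φ f : Ω → ℝ}
    (hφ : Measurable[m] φ) {C : ℝ} (hbd : ∀ ω, |φ ω| ≤ C) (hf : Integrable f μ) :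
    ∫ ω, φ ω * (μ[f|m]) ω ∂μ = ∫ ω, φ ω * f ω ∂μ := by
  have hφmF : Measurable[mF] φ := hφ.mono hm le_rfl
  have hint : Integrable (φ * f) μ :=
    hf.bdd_mul (hφmF.aestronglyMeasurable : AEStronglyMeasurable[mF] φ μ)
      (c := C) (Filter.Eventually.of_forall fun ω => by simpa [Real.norm_eq_abs] using hbd ω)
  have hmul := condExp_mul_of_stronglyMeasurable_left (μ := μ) hφ.stronglyMeasurable hint hf
  calc ∫ ω, φ ω * (μ[f|m]) ω ∂μ = ∫ ω, (μ[(φ * f : Ω → ℝ)|m]) ω ∂μ :=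
        (integral_congr_ae hmul).symm
    _ = ∫ ω, (φ * f : Ω → ℝ) ω ∂μ := integral_condExp hm
    _ = ∫ ω, φ ω * f ω ∂μ := rfl
end KL

section Aux

variable {T : ℕ} {n : Fin (T + 1) → ℕ} {Ω : Type*} [mF : MeasurableSpace Ω]

noncomputable def Gfil (mF : MeasurableSpace Ω) (F : Fin (T + 1) → MeasurableSpace Ω) (k : ℕ) :
    MeasurableSpace Ω :=
  if hk : k < T + 1 then F ⟨k, hk⟩ else mF

variable (μ : Measure Ω) (F : Fin (T + 1) → MeasurableSpace Ω)
  (x v : Ω → ∀ t, Fin (n t) → ℝ)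

noncomputable def Wproc (μ : Measure Ω) (F : Fin (T + 1) → MeasurableSpace Ω)
    (x v : Ω → ∀ t, Fin (n t) → ℝ) (k : ℕ) : Ω → ℝ :=
  fun ω => ∑ t : Fin (T + 1), ∑ i : Fin (n t),
    if (t : ℕ) < k then x ω t i * (μ[(fun ω' => v ω' t i)|Gfil mF F k]) ω else 0

lemma Gfil_le (hFle : ∀ t, F t ≤ mF) (k : ℕ) : Gfil mF F k ≤ mF := by
  unfold Gfil; split
  · exact hFle _
  · exact le_rfl

lemma Gfil_mono (hFle : ∀ t, F t ≤ mF) (hFmono : Monotone F) {j k : ℕ} (hjk : j ≤ k) : Gfil mF F j ≤ Gfil mF F k := by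
  unfold Gfil
  split
  · split
    · exact hFmono (by simpa using hjk)
    · exact hFle _
  · split
    · omega
    · exact le_rfl

lemma F_le_Gfil (hFle : ∀ t, F t ≤ mF) (hFmono : Monotone F) {t : Fin (T + 1)} {k : ℕ} (htk : (t : ℕ) ≤ k) : F t ≤ Gfil mF F k := by
  unfold Gfil; split
  · exact hFmono (by rw [Fin.le_def]; exact htk)
  · exact hFle _

lemma vti_int (hvint : Integrable v μ) (t : Fin (T + 1)) (i : Fin (n t)) :
    Integrable (fun ω => v ω t i) μ := by
  have h1 : AEStronglyMeasurable (fun ω => v ω t) μ :=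
    (continuous_apply t).comp_aestronglyMeasurable hvint.aestronglyMeasurable
  have h2 : AEStronglyMeasurable (fun ω => v ω t i) μ :=
    (continuous_apply i).comp_aestronglyMeasurable h1
  refine hvint.norm.mono h2 (Filter.Eventually.of_forall fun ω => ?_)
  calc ‖v ω t i‖ ≤ ‖v ω t‖ := norm_le_pi_norm (v ω t) i
    _ ≤ ‖v ω‖ := norm_le_pi_norm (v ω) t
    _ ≤ ‖‖v ω‖‖ := le_abs_self _

lemma xti_meas_G (hFle : ∀ t, F t ≤ mF) (hFmono : Monotone F)
    (hxadapted : ∀ t, Measurable[F t] fun ω => x ω t) {t : Fin (T + 1)} {k : ℕ} (htk : (t : ℕ) ≤ k) (i : Fin (n t)) :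
    Measurable[Gfil mF F k] fun ω => x ω t i :=
  (measurable_pi_apply i).comp ((hxadapted t).mono (F_le_Gfil F hFle hFmono htk) le_rfl)

lemma Wproc_meas (hFle : ∀ t, F t ≤ mF) (hFmono : Monotone F)
    (hxadapted : ∀ t, Measurable[F t] fun ω => x ω t) (k : ℕ) : Measurable[Gfil mF F k] (Wproc μ F x v k) := by
  unfold Wproc
  apply Finset.measurable_sum
  intro t _
  apply Finset.measurable_sum
  intro i _
  by_cases ht : (t : ℕ) < k
  · simp only [if_pos ht]
    exact (xti_meas_G F x hFle hFmono hxadapted ht.le i).mul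
      stronglyMeasurable_condExp.measurable
  · simp only [if_neg ht]; exact measurable_const

/-- CORE orthogonality lemma. -/
lemma Wproc_core [IsProbabilityMeasure μ] (hFle : ∀ t, F t ≤ mF) (hFmono : Monotone F)
    (hxadapted : ∀ t, Measurable[F t] fun ω => x ω t) (hvint : Integrable v μ)
    (hvperp : ∀ z : Ω → ∀ t, Fin (n t) → ℝ, (∀ t, Measurable[F t] fun ω => z ω t) →
      (∃ C : ℝ, ∀ ω, ‖z ω‖ ≤ C) → ∫ ω, ∑ t, ∑ i, z ω t i * v ω t i ∂μ = 0)
    {k : ℕ} (hk : k ≤ T) {A : Set Ω} (hA : MeasurableSet[Gfil mF F k] A) {m : ℝ}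
    (hAx : ∀ ω ∈ A, ∀ t : Fin (T + 1), (t : ℕ) ≤ k → ‖x ω t‖ ≤ m) :
    Integrable (A.indicator fun ω => Wproc μ F x v (k + 1) ω - Wproc μ F x v k ω) μ ∧
    ∫ ω, A.indicator (fun ω' => Wproc μ F x v (k + 1) ω' - Wproc μ F x v k ω') ω ∂μ = 0 := by
  classical
  set C := max m 0 with hC
  -- the masked coefficients
  set φ : (t : Fin (T + 1)) → Fin (n t) → Ω → ℝ :=
    fun t i => A.indicator (fun ω => x ω t i) with hφdef
  have hφmeas : ∀ (t : Fin (T + 1)), (t : ℕ) ≤ k → ∀ i,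
      Measurable[Gfil mF F k] (φ t i) := fun t htk i =>
    (xti_meas_G F x hFle hFmono hxadapted htk i).indicator hA
  have hφbd : ∀ (t : Fin (T + 1)), (t : ℕ) ≤ k → ∀ i ω, |φ t i ω| ≤ C := by
    intro t htk i ω
    by_cases hω : ω ∈ A
    · simp only [hφdef, Set.indicator_of_mem hω]
      calc |x ω t i| ≤ ‖x ω t‖ := by
            simpa [Real.norm_eq_abs] using norm_le_pi_norm (x ω t) i
        _ ≤ m := hAx ω hω t htk
        _ ≤ C := le_max_left _ _
    · simp [hφdef, Set.indicator_of_notMem hω, le_max_right m 0]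
      exact le_max_right m 0
  have key : ∀ (m' : MeasurableSpace Ω), Gfil mF F k ≤ m' → (hm' : m' ≤ mF) →
      ∀ (t : Fin (T + 1)), (t : ℕ) ≤ k → ∀ i,
      Integrable (fun ω => φ t i ω * (μ[(fun ω' => v ω' t i)|m']) ω) μ ∧
      ∫ ω, φ t i ω * (μ[(fun ω' => v ω' t i)|m']) ω ∂μ = ∫ ω, φ t i ω * v ω t i ∂μ := by
    intro m' hGm' hm' t htk i
    have hφm' : Measurable[m'] (φ t i) := (hφmeas t htk i).mono hGm' le_rfl
    have hφmF : Measurable[mF] (φ t i) := hφm'.mono hm' le_rfl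
    constructor
    · exact (integrable_condExp).bdd_mul
        (hφmF.aestronglyMeasurable : AEStronglyMeasurable[mF] (φ t i) μ)
        (c := C) (Filter.Eventually.of_forall fun ω => by simpa [Real.norm_eq_abs] using hφbd t htk i ω)
    · exact integral_bdd_mul_condexp hm' hφm' (hφbd t htk i) (vti_int (mF := mF) μ v hvint t i)
  have hGk1 : Gfil mF F k ≤ Gfil mF F (k + 1) := Gfil_mono F hFle hFmono (Nat.le_succ k)
  have hk1le : Gfil mF F (k + 1) ≤ mF := Gfil_le F hFle (k + 1)
  have hkle : Gfil mF F k ≤ mF := Gfil_le F hFle k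
  have hφvint : ∀ (t : Fin (T + 1)), (t : ℕ) ≤ k → ∀ i,
      Integrable (fun ω => φ t i ω * v ω t i) μ := by
    intro t htk i
    have hφmF : Measurable[mF] (φ t i) := (hφmeas t htk i).mono hkle le_rfl
    exact (vti_int μ v hvint t i).bdd_mul
      (hφmF.aestronglyMeasurable : AEStronglyMeasurable[mF] (φ t i) μ)
      (c := C) (Filter.Eventually.of_forall fun ω => by simpa [Real.norm_eq_abs] using hφbd t htk i ω)
  -- per-pair decomposition
  set d : (t : Fin (T + 1)) → Fin (n t) → Ω → ℝ := fun t i ω =>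
    (if (t : ℕ) < k + 1 then φ t i ω * (μ[(fun ω' => v ω' t i)|Gfil mF F (k + 1)]) ω else 0) -
    (if (t : ℕ) < k then φ t i ω * (μ[(fun ω' => v ω' t i)|Gfil mF F k]) ω else 0) with hddef
  have hid : A.indicator (fun ω => Wproc μ F x v (k + 1) ω - Wproc μ F x v k ω)
      = fun ω => ∑ t : Fin (T + 1), ∑ i : Fin (n t), d t i ω := by
    funext ω
    by_cases hω : ω ∈ A
    · rw [Set.indicator_of_mem hω]
      unfold Wproc
      rw [← Finset.sum_sub_distrib]
      refine Finset.sum_congr rfl fun t _ => ?_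
      rw [← Finset.sum_sub_distrib]
      refine Finset.sum_congr rfl fun i _ => ?_
      simp only [hddef, hφdef, Set.indicator_of_mem hω]
    · rw [Set.indicator_of_notMem hω]
      symm
      refine Finset.sum_eq_zero fun t _ => Finset.sum_eq_zero fun i _ => ?_
      simp only [hddef, hφdef, Set.indicator_of_notMem hω]
      split <;> split <;> simp
  have hd1 : ∀ (t : Fin (T + 1)) (i : Fin (n t)),
      Integrable (fun ω => if (t : ℕ) < k + 1
        then φ t i ω * (μ[(fun ω' => v ω' t i)|Gfil mF F (k + 1)]) ω else 0) μ := by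
    intro t i
    by_cases ht : (t : ℕ) < k + 1
    · simp only [if_pos ht]
      exact (key _ hGk1 hk1le t (by omega) i).1
    · simp only [if_neg ht]
      exact integrable_zero _ _ _
  have hd2 : ∀ (t : Fin (T + 1)) (i : Fin (n t)),
      Integrable (fun ω => if (t : ℕ) < k
        then φ t i ω * (μ[(fun ω' => v ω' t i)|Gfil mF F k]) ω else 0) μ := by
    intro t i
    by_cases ht : (t : ℕ) < k
    · simp only [if_pos ht]
      exact (key _ le_rfl hkle t (by omega) i).1
    · simp only [if_neg ht]
      exact integrable_zero _ _ _
  have hdint : ∀ (t : Fin (T + 1)) (i : Fin (n t)), Integrable (d t i) μ := by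
    intro t i
    exact (hd1 t i).sub (hd2 t i)
  have hint : Integrable (A.indicator fun ω =>
      Wproc μ F x v (k + 1) ω - Wproc μ F x v k ω) μ := by
    rw [hid]
    exact integrable_finset_sum _ fun t _ => integrable_finset_sum _ fun i _ => hdint t i
  refine ⟨hint, ?_⟩
  have hκ : k < T + 1 := by omega
  set k' : Fin (T + 1) := ⟨k, hκ⟩ with hk'def
  calc ∫ ω, A.indicator (fun ω' => Wproc μ F x v (k + 1) ω' - Wproc μ F x v k ω') ω ∂μ
      = ∫ ω, ∑ t : Fin (T + 1), ∑ i : Fin (n t), d t i ω ∂μ := by rw [hid]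
    _ = ∑ t : Fin (T + 1), ∑ i : Fin (n t), ∫ ω, d t i ω ∂μ := by
        rw [integral_finset_sum _ fun t _ => integrable_finset_sum _ fun i _ => hdint t i]
        exact Finset.sum_congr rfl fun t _ =>
          integral_finset_sum _ fun i _ => hdint t i
    _ = ∑ t : Fin (T + 1), ∑ i : Fin (n t),
          ((if (t : ℕ) < k + 1 then ∫ ω, φ t i ω * v ω t i ∂μ else 0) -
           (if (t : ℕ) < k then ∫ ω, φ t i ω * v ω t i ∂μ else 0)) := by
        refine Finset.sum_congr rfl fun t _ => Finset.sum_congr rfl fun i _ => ?_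
        rw [hddef]
        rw [integral_sub (hd1 t i) (hd2 t i)]
        congr 1
        · by_cases ht : (t : ℕ) < k + 1
          · simp only [if_pos ht]
            exact (key _ hGk1 hk1le t (by omega) i).2
          · simp only [if_neg ht, integral_zero]
        · by_cases ht : (t : ℕ) < k
          · simp only [if_pos ht]
            exact (key _ le_rfl hkle t (by omega) i).2
          · simp only [if_neg ht, integral_zero]
    _ = ∑ i : Fin (n k'), ∫ ω, φ k' i ω * v ω k' i ∂μ := by
        rw [Finset.sum_eq_single k']
        · refine Finset.sum_congr rfl fun i _ => ?_
          have h1 : ((k' : ℕ)) < k + 1 := by simp [hk'def]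
          have h2 : ¬ ((k' : ℕ) < k) := by simp [hk'def]
          rw [if_pos h1, if_neg h2, sub_zero]
        · intro t _ htne
          refine Finset.sum_eq_zero fun i _ => ?_
          by_cases ht : (t : ℕ) < k
          · have h3 : (t : ℕ) < k + 1 := by omega
            rw [if_pos h3, if_pos ht, sub_self]
          · have htk1 : ¬ ((t : ℕ) < k + 1) := by
              rcases Nat.lt_or_ge (t : ℕ) (k + 1) with hlt | hge
              · exfalso; apply htne; apply Fin.ext; simpa [hk'def] using by omega
              · omega
            rw [if_neg ht, if_neg htk1, sub_self]
        · intro habs; exact absurd (Finset.mem_univ k') habs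
    _ = 0 := by
        -- use hvperp with the masked strategy supported at time k
        set z : Ω → ∀ t, Fin (n t) → ℝ := fun ω t =>
          if (t : ℕ) = k then A.indicator (fun ω' => x ω' t) ω else 0 with hzdef
        have hzad : ∀ t, Measurable[F t] fun ω => z ω t := by
          intro t
          by_cases ht : (t : ℕ) = k
          · have htk' : t = k' := Fin.ext (by simp [hk'def, ht])
            have hAFt : MeasurableSet[F t] A := by
              have : Gfil mF F k = F t := by
                rw [htk']; unfold Gfil; rw [dif_pos hκ]
              rw [← this]; exact hA
            simp only [hzdef, if_pos ht]
            exact (hxadapted t).indicator hAFt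
          · simp only [hzdef, if_neg ht]
            exact measurable_const
        have hzbd : ∃ C' : ℝ, ∀ ω, ‖z ω‖ ≤ C' := by
          refine ⟨C, fun ω => ?_⟩
          rw [pi_norm_le_iff_of_nonneg (le_max_right m 0)]
          intro t
          by_cases ht : (t : ℕ) = k
          · simp only [hzdef, if_pos ht]
            by_cases hω : ω ∈ A
            · rw [Set.indicator_of_mem hω]
              exact le_trans (hAx ω hω t (by omega)) (le_max_left _ _)
            · rw [Set.indicator_of_notMem hω]
              simp [le_max_right m 0]
          · simp only [hzdef, if_neg ht]
            simp [le_max_right m 0]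
        have hz0 := hvperp z hzad hzbd
        have hzeq : ∀ ω, ∑ t : Fin (T + 1), ∑ i : Fin (n t), z ω t i * v ω t i
            = ∑ i : Fin (n k'), φ k' i ω * v ω k' i := by
          intro ω
          rw [Finset.sum_eq_single k']
          · refine Finset.sum_congr rfl fun i _ => ?_
            have h1 : ((k' : ℕ)) = k := rfl
            simp only [hzdef, if_pos h1, hφdef]
            by_cases hω : ω ∈ A <;>
              simp [Set.indicator_of_mem, Set.indicator_of_notMem, hω]
          · intro t _ htne
            have ht : ¬ ((t : ℕ) = k) := fun habs => htne (Fin.ext (by simp [hk'def, habs]))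
            refine Finset.sum_eq_zero fun i _ => ?_
            simp [hzdef, if_neg ht]
          · intro habs; exact absurd (Finset.mem_univ k') habs
        rw [← integral_finset_sum _ fun i _ => hφvint k' (le_refl k) i]
        · rw [← hz0]
          exact integral_congr_ae (Filter.Eventually.of_forall fun ω => (hzeq ω).symm)
    

lemma Wproc_zero : Wproc (mF := mF) μ F x v 0 = fun _ => (0 : ℝ) := by
  funext ω
  unfold Wproc
  refine Finset.sum_eq_zero fun t _ => Finset.sum_eq_zero fun i _ => ?_
  simp

lemma Wproc_top [IsProbabilityMeasure μ] (hvint : Integrable v μ) :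
    Wproc (mF := mF) μ F x v (T + 1) =ᵐ[μ]
      fun ω => ∑ t : Fin (T + 1), ∑ i : Fin (n t), x ω t i * v ω t i := by
  have h : ∀ (t : Fin (T + 1)) (i : Fin (n t)),
      (μ[(fun ω' => v ω' t i)|Gfil mF F (T + 1)]) =ᵐ[μ] fun ω => v ω t i := by
    intro t i
    have hG : Gfil (T := T) mF F (T + 1) = mF := by
      unfold Gfil; rw [dif_neg (lt_irrefl _)]
    rw [hG]
    have hasm := (vti_int (mF := mF) μ v hvint t i).aestronglyMeasurable
    exact condExp_of_aestronglyMeasurable' le_rfl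
      hasm (vti_int (mF := mF) μ v hvint t i)
  have hall : ∀ᵐ ω ∂μ, ∀ (t : Fin (T + 1)) (i : Fin (n t)),
      (μ[(fun ω' => v ω' t i)|Gfil mF F (T + 1)]) ω = v ω t i := by
    rw [ae_all_iff]
    intro t
    rw [ae_all_iff]
    intro i
    exact h t i
  filter_upwards [hall] with ω hω
  unfold Wproc
  refine Finset.sum_congr rfl fun t _ => Finset.sum_congr rfl fun i _ => ?_
  rw [if_pos t.isLt, hω t i]

/-- Backward step for positive parts. -/
lemma Wproc_posfin_step [IsProbabilityMeasure μ] (hFle : ∀ t, F t ≤ mF) (hFmono : Monotone F)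
    (hxadapted : ∀ t, Measurable[F t] fun ω => x ω t) (hvint : Integrable v μ)
    (hvperp : ∀ z : Ω → ∀ t, Fin (n t) → ℝ, (∀ t, Measurable[F t] fun ω => z ω t) →
      (∃ C : ℝ, ∀ ω, ‖z ω‖ ≤ C) → ∫ ω, ∑ t, ∑ i, z ω t i * v ω t i ∂μ = 0)
    {k : ℕ} (hk : k ≤ T)
    (hfin : ∫⁻ ω, ENNReal.ofReal (Wproc (mF := mF) μ F x v (k + 1) ω) ∂μ ≠ ⊤) :
    ∫⁻ ω, ENNReal.ofReal (Wproc (mF := mF) μ F x v k ω) ∂μ ≠ ⊤ := by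
  classical
  set W := Wproc (mF := mF) μ F x v with hWdef
  have hWmeasK : Measurable[Gfil mF F k] (W k) := Wproc_meas μ F x v hFle hFmono hxadapted k
  have hWk : Measurable[mF] (W k) := hWmeasK.mono (Gfil_le F hFle k) le_rfl
  have hWk1 : Measurable[mF] (W (k + 1)) :=
    (Wproc_meas μ F x v hFle hFmono hxadapted (k + 1)).mono (Gfil_le F hFle (k + 1)) le_rfl
  -- positive part of W (k+1)
  set p : Ω → ℝ := fun ω => max (W (k + 1) ω) 0 with hpdef
  have hpmeas : Measurable[mF] p := hWk1.max measurable_const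
  have hpint : Integrable p μ := by
    refine ⟨hpmeas.aestronglyMeasurable, ?_⟩
    rw [hasFiniteIntegral_iff_norm]
    have heq : ∀ ω, ENNReal.ofReal ‖p ω‖ = ENNReal.ofReal (W (k + 1) ω) := by
      intro ω
      rw [Real.norm_eq_abs, abs_of_nonneg (le_max_right _ _)]
      rcases le_or_gt 0 (W (k + 1) ω) with hc | hc
      · rw [hpdef]; simp [max_eq_left hc]
      · rw [hpdef]; simp only [max_eq_right hc.le]
        rw [ENNReal.ofReal_of_nonpos hc.le]
        simp
    rw [lintegral_congr heq]
    exact lt_top_iff_ne_top.2 hfin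
  have hpnonneg : ∀ ω, W (k + 1) ω ≤ p ω := fun ω => le_max_left _ _
  -- truncation sets
  set A : ℕ → Set Ω := fun m =>
    {ω | 0 ≤ W k ω} ∩ {ω | W k ω ≤ (m : ℝ)} ∩
      ⋂ t : Fin (T + 1), {ω | (t : ℕ) ≤ k → ‖x ω t‖ ≤ (m : ℝ)} with hAdef
  have hAmeas : ∀ m, MeasurableSet[Gfil mF F k] (A m) := by
    intro m
    have h1 : MeasurableSet[Gfil mF F k] {ω | 0 ≤ W k ω} := hWmeasK measurableSet_Ici
    have h2 : MeasurableSet[Gfil mF F k] {ω | W k ω ≤ (m : ℝ)} := hWmeasK measurableSet_Iic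
    refine ((h1.inter h2).inter (MeasurableSet.iInter fun t => ?_))
    by_cases htk : (t : ℕ) ≤ k
    · have hxn : Measurable[Gfil mF F k] fun ω => ‖x ω t‖ :=
        measurable_norm.comp ((hxadapted t).mono (F_le_Gfil F hFle hFmono htk) le_rfl)
      have : {ω | (t : ℕ) ≤ k → ‖x ω t‖ ≤ (m : ℝ)} = {ω | ‖x ω t‖ ≤ (m : ℝ)} := by
        ext ω; simp [htk]
      rw [this]
      exact hxn measurableSet_Iic
    · have : {ω | (t : ℕ) ≤ k → ‖x ω t‖ ≤ (m : ℝ)} = Set.univ := by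
        ext ω; simp [htk]
      rw [this]; exact MeasurableSet.univ
  have hAx : ∀ (m : ℕ), ∀ ω ∈ A m, ∀ t : Fin (T + 1), (t : ℕ) ≤ k → ‖x ω t‖ ≤ (m : ℝ) := by
    intro m ω hω t htk
    exact Set.mem_iInter.1 hω.2 t htk
  have hAWk : ∀ m ω, ω ∈ A m → 0 ≤ W k ω ∧ W k ω ≤ (m : ℝ) := fun m ω hω => ⟨hω.1.1, hω.1.2⟩
  -- per-m facts
  have hmain : ∀ m : ℕ, ENNReal.ofReal (∫ ω, (A m).indicator (W k) ω ∂μ)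
      = ∫⁻ ω, ENNReal.ofReal ((A m).indicator (W k) ω) ∂μ
      ∧ ∫ ω, (A m).indicator (W k) ω ∂μ ≤ ∫ ω, p ω ∂μ := by
    intro m
    obtain ⟨hDint, hDzero⟩ := Wproc_core μ F x v hFle hFmono hxadapted hvint hvperp hk
      (hAmeas m) (hAx m)
    have hAmF : MeasurableSet (A m) := (Gfil_le F hFle k) _ (hAmeas m)
    have h1AWk : Integrable ((A m).indicator (W k)) μ := by
      refine Integrable.mono' (integrable_const (m : ℝ)) (hWk.indicator hAmF).aestronglyMeasurable
        (Filter.Eventually.of_forall fun ω => ?_)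
      by_cases hω : ω ∈ A m
      · rw [Set.indicator_of_mem hω, Real.norm_eq_abs,
          abs_of_nonneg (hAWk m ω hω).1]
        exact (hAWk m ω hω).2
      · rw [Set.indicator_of_notMem hω]
        simp [Nat.cast_nonneg]
    have hsplit : (A m).indicator (W (k + 1)) = fun ω =>
        (A m).indicator (W k) ω + (A m).indicator (fun ω' => W (k + 1) ω' - W k ω') ω := by
      funext ω
      by_cases hω : ω ∈ A m
      · simp only [Set.indicator_of_mem hω]; ring
      · simp only [Set.indicator_of_notMem hω]; ring
    have h1AWk1 : Integrable ((A m).indicator (W (k + 1))) μ := by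
      rw [hsplit]; exact h1AWk.add hDint
    have hinteq : ∫ ω, (A m).indicator (W (k + 1)) ω ∂μ = ∫ ω, (A m).indicator (W k) ω ∂μ := by
      rw [hsplit, integral_add h1AWk hDint, hDzero, add_zero]
    constructor
    · exact ofReal_integral_eq_lintegral_ofReal h1AWk
        (Filter.Eventually.of_forall fun ω => by
          by_cases hω : ω ∈ A m
          · simpa [Set.indicator_of_mem hω] using (hAWk m ω hω).1
          · simp [Set.indicator_of_notMem hω])
    · rw [← hinteq]
      refine integral_mono h1AWk1 hpint fun ω => ?_
      by_cases hω : ω ∈ A m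
      · rw [Set.indicator_of_mem hω]; exact hpnonneg ω
      · rw [Set.indicator_of_notMem hω]; exact le_max_right _ _
  -- monotone convergence
  have hGm : ∀ m : ℕ, Measurable[mF] fun ω => ENNReal.ofReal ((A m).indicator (W k) ω) :=
    fun m => ENNReal.measurable_ofReal.comp (hWk.indicator ((Gfil_le F hFle k) _ (hAmeas m)))
  have hAsub : ∀ {a b : ℕ}, a ≤ b → A a ⊆ A b := by
    intro a b hab ω hω
    have hcast : (a : ℝ) ≤ (b : ℝ) := Nat.cast_le.2 hab
    refine ⟨⟨hω.1.1, le_trans hω.1.2 hcast⟩, ?_⟩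
    refine Set.mem_iInter.2 fun t => fun htk => le_trans (Set.mem_iInter.1 hω.2 t htk) hcast
  have hmono : Monotone fun m : ℕ => fun ω => ENNReal.ofReal ((A m).indicator (W k) ω) := by
    intro a b hab
    intro ω
    dsimp only
    by_cases hω : ω ∈ A a
    · rw [Set.indicator_of_mem hω, Set.indicator_of_mem (hAsub hab hω)]
    · rw [Set.indicator_of_notMem hω]
      simp
  have hsup : ∀ ω, (⨆ m : ℕ, ENNReal.ofReal ((A m).indicator (W k) ω))
      = ENNReal.ofReal (W k ω) := by
    intro ω
    refine le_antisymm (iSup_le fun m => ?_) ?_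
    · by_cases hω : ω ∈ A m
      · rw [Set.indicator_of_mem hω]
      · rw [Set.indicator_of_notMem hω]; simp
    · rcases le_or_gt 0 (W k ω) with hc | hc
      · obtain ⟨m, hm⟩ := exists_nat_ge (max (W k ω) (∑ t : Fin (T + 1), ‖x ω t‖))
        have hωm : ω ∈ A m := by
          refine ⟨⟨hc, le_trans (le_max_left _ _) hm⟩, Set.mem_iInter.2 fun t htk => ?_⟩
          refine le_trans ?_ (le_trans (le_max_right _ _) hm)
          exact Finset.single_le_sum (f := fun t : Fin (T + 1) => ‖x ω t‖)
            (fun t _ => norm_nonneg _) (Finset.mem_univ t)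
        calc ENNReal.ofReal (W k ω) = ENNReal.ofReal ((A m).indicator (W k) ω) := by
              rw [Set.indicator_of_mem hωm]
          _ ≤ ⨆ m : ℕ, ENNReal.ofReal ((A m).indicator (W k) ω) :=
              le_iSup (fun m : ℕ => ENNReal.ofReal ((A m).indicator (W k) ω)) m
      · rw [ENNReal.ofReal_of_nonpos hc.le]
        simp
  have hMCT : ∫⁻ ω, ENNReal.ofReal (W k ω) ∂μ
      = ⨆ m : ℕ, ∫⁻ ω, ENNReal.ofReal ((A m).indicator (W k) ω) ∂μ := by
    rw [← lintegral_iSup hGm hmono]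
    exact lintegral_congr fun ω => (hsup ω).symm
  rw [hMCT]
  refine ne_top_of_le_ne_top (b := ENNReal.ofReal (∫ ω, p ω ∂μ)) ENNReal.ofReal_ne_top ?_
  refine iSup_le fun m => ?_
  rw [← (hmain m).1]
  exact ENNReal.ofReal_le_ofReal (hmain m).2

/-- Forward step: transporting integrability and zero integral from `W k` to `W (k+1)`. -/
lemma Wproc_int_step [IsProbabilityMeasure μ] (hFle : ∀ t, F t ≤ mF) (hFmono : Monotone F)
    (hxadapted : ∀ t, Measurable[F t] fun ω => x ω t) (hvint : Integrable v μ)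
    (hvperp : ∀ z : Ω → ∀ t, Fin (n t) → ℝ, (∀ t, Measurable[F t] fun ω => z ω t) →
      (∃ C : ℝ, ∀ ω, ‖z ω‖ ≤ C) → ∫ ω, ∑ t, ∑ i, z ω t i * v ω t i ∂μ = 0)
    {k : ℕ} (hk : k ≤ T)
    (hfin1 : ∫⁻ ω, ENNReal.ofReal (Wproc (mF := mF) μ F x v (k + 1) ω) ∂μ ≠ ⊤)
    (hintk : Integrable (Wproc (mF := mF) μ F x v k) μ)
    (hzero : ∫ ω, Wproc (mF := mF) μ F x v k ω ∂μ = 0) :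
    Integrable (Wproc (mF := mF) μ F x v (k + 1)) μ ∧
      ∫ ω, Wproc (mF := mF) μ F x v (k + 1) ω ∂μ = 0 := by
  classical
  set W := Wproc (mF := mF) μ F x v with hWdef
  have hWmeasK : Measurable[Gfil mF F k] (W k) := Wproc_meas μ F x v hFle hFmono hxadapted k
  have hWk : Measurable[mF] (W k) := hWmeasK.mono (Gfil_le F hFle k) le_rfl
  have hWk1 : Measurable[mF] (W (k + 1)) :=
    (Wproc_meas μ F x v hFle hFmono hxadapted (k + 1)).mono (Gfil_le F hFle (k + 1)) le_rfl
  -- truncation sets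
  set A : ℕ → Set Ω := fun m =>
    {ω | ‖W k ω‖ ≤ (m : ℝ)} ∩
      ⋂ t : Fin (T + 1), {ω | (t : ℕ) ≤ k → ‖x ω t‖ ≤ (m : ℝ)} with hAdef
  have hAmeas : ∀ m, MeasurableSet[Gfil mF F k] (A m) := by
    intro m
    have h2 : MeasurableSet[Gfil mF F k] {ω | ‖W k ω‖ ≤ (m : ℝ)} :=
      (measurable_norm.comp hWmeasK) measurableSet_Iic
    refine (h2.inter (MeasurableSet.iInter fun t => ?_))
    by_cases htk : (t : ℕ) ≤ k
    · have hxn : Measurable[Gfil mF F k] fun ω => ‖x ω t‖ :=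
        measurable_norm.comp ((hxadapted t).mono (F_le_Gfil F hFle hFmono htk) le_rfl)
      have : {ω | (t : ℕ) ≤ k → ‖x ω t‖ ≤ (m : ℝ)} = {ω | ‖x ω t‖ ≤ (m : ℝ)} := by
        ext ω; simp [htk]
      rw [this]
      exact hxn measurableSet_Iic
    · have : {ω | (t : ℕ) ≤ k → ‖x ω t‖ ≤ (m : ℝ)} = Set.univ := by
        ext ω; simp [htk]
      rw [this]; exact MeasurableSet.univ
  have hAmF : ∀ m, MeasurableSet (A m) := fun m => (Gfil_le F hFle k) _ (hAmeas m)
  have hAx : ∀ (m : ℕ), ∀ ω ∈ A m, ∀ t : Fin (T + 1), (t : ℕ) ≤ k → ‖x ω t‖ ≤ (m : ℝ) := by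
    intro m ω hω t htk
    exact Set.mem_iInter.1 hω.2 t htk
  have hAmem : ∀ ω, ∃ m₀ : ℕ, ∀ m ≥ m₀, ω ∈ A m := by
    intro ω
    obtain ⟨m₀, hm₀⟩ := exists_nat_ge (max (‖W k ω‖) (∑ t : Fin (T + 1), ‖x ω t‖))
    refine ⟨m₀, fun m hm => ?_⟩
    have hcast : (m₀ : ℝ) ≤ (m : ℝ) := Nat.cast_le.2 hm
    constructor
    · exact le_trans (le_trans (le_max_left _ _) hm₀) hcast
    · refine Set.mem_iInter.2 fun t htk => ?_
      refine le_trans (Finset.single_le_sum (f := fun t : Fin (T + 1) => ‖x ω t‖)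
        (fun t _ => norm_nonneg _) (Finset.mem_univ t)) ?_
      exact le_trans (le_trans (le_max_right _ _) hm₀) hcast
  -- per m equality of integrals
  have hmain : ∀ m : ℕ, Integrable ((A m).indicator (W k)) μ ∧
      Integrable ((A m).indicator (W (k + 1))) μ ∧
      ∫ ω, (A m).indicator (W (k + 1)) ω ∂μ = ∫ ω, (A m).indicator (W k) ω ∂μ := by
    intro m
    obtain ⟨hDint, hDzero⟩ := Wproc_core μ F x v hFle hFmono hxadapted hvint hvperp hk
      (hAmeas m) (hAx m)
    have h1AWk : Integrable ((A m).indicator (W k)) μ := by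
      refine Integrable.mono' (integrable_const (m : ℝ))
        (hWk.indicator (hAmF m)).aestronglyMeasurable
        (Filter.Eventually.of_forall fun ω => ?_)
      by_cases hω : ω ∈ A m
      · rw [Set.indicator_of_mem hω]
        exact hω.1
      · rw [Set.indicator_of_notMem hω]
        simp [Nat.cast_nonneg]
    have hsplit : (A m).indicator (W (k + 1)) = fun ω =>
        (A m).indicator (W k) ω + (A m).indicator (fun ω' => W (k + 1) ω' - W k ω') ω := by
      funext ω
      by_cases hω : ω ∈ A m
      · simp only [Set.indicator_of_mem hω]; ring
      · simp only [Set.indicator_of_notMem hω]; ring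
    refine ⟨h1AWk, ?_, ?_⟩
    · rw [hsplit]; exact h1AWk.add hDint
    · rw [hsplit, integral_add h1AWk hDint, hDzero, add_zero]
  -- uniform bound on the truncated negative parts
  set c : ℝ := ∫ ω, ‖W k ω‖ ∂μ with hcdef
  have hc0 : 0 ≤ c := integral_nonneg fun ω => norm_nonneg _
  have hNbound : ∀ m : ℕ,
      ∫⁻ ω, (A m).indicator (fun ω' => ENNReal.ofReal (-(W (k + 1) ω'))) ω ∂μ
        ≤ (∫⁻ ω, ENNReal.ofReal (W (k + 1) ω) ∂μ) + ENNReal.ofReal c := by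
    intro m
    obtain ⟨h1AWk, hgint, hgeq⟩ := hmain m
    set g : Ω → ℝ := (A m).indicator (W (k + 1)) with hgdef
    have hng : ∀ ω, (A m).indicator (fun ω' => ENNReal.ofReal (-(W (k + 1) ω'))) ω
        = ENNReal.ofReal (-(g ω)) := by
      intro ω
      by_cases hω : ω ∈ A m
      · rw [Set.indicator_of_mem hω, hgdef, Set.indicator_of_mem hω]
      · rw [Set.indicator_of_notMem hω, hgdef, Set.indicator_of_notMem hω]
        simp
    have hpg : ∀ ω, ENNReal.ofReal (g ω) ≤ ENNReal.ofReal (W (k + 1) ω) := by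
      intro ω
      by_cases hω : ω ∈ A m
      · rw [hgdef, Set.indicator_of_mem hω]
      · rw [hgdef, Set.indicator_of_notMem hω]
        simp
    have hgval := integral_eq_lintegral_pos_part_sub_lintegral_neg_part hgint
    have hPfin : ∫⁻ ω, ENNReal.ofReal (g ω) ∂μ ≠ ⊤ :=
      ne_top_of_le_ne_top hfin1 (lintegral_mono hpg)
    have hofnorm : ∀ (a : ℝ), ENNReal.ofReal (-a) ≤ (‖a‖₊ : ℝ≥0∞) := by
      intro a
      rw [← ENNReal.ofReal_coe_nnreal, coe_nnnorm]
      exact ENNReal.ofReal_le_ofReal (neg_le_abs a)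
    have hNfin : ∫⁻ ω, ENNReal.ofReal (-(g ω)) ∂μ ≠ ⊤ := by
      refine ne_top_of_le_ne_top hgint.2.ne (lintegral_mono fun ω => hofnorm (g ω))
    -- bound on ∫ g
    have hgeq2 : ∫ ω, g ω ∂μ = ∫ ω, (A m).indicator (W k) ω ∂μ := hgeq
    have hbnd : -c ≤ ∫ ω, g ω ∂μ := by
      rw [hgeq2]
      have habs : ‖∫ ω, (A m).indicator (W k) ω ∂μ‖ ≤ c := by
        refine le_trans (norm_integral_le_integral_norm _) ?_
        refine integral_mono h1AWk.norm hintk.norm fun ω => ?_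
        by_cases hω : ω ∈ A m
        · rw [Set.indicator_of_mem hω]
        · rw [Set.indicator_of_notMem hω]; simp
      have := neg_le_of_abs_le (by rwa [Real.norm_eq_abs] at habs)
      linarith [this]
    have htoReal : (∫⁻ ω, ENNReal.ofReal (-(g ω)) ∂μ).toReal
        ≤ (∫⁻ ω, ENNReal.ofReal (g ω) ∂μ).toReal + c := by
      have : (∫⁻ ω, ENNReal.ofReal (-(g ω)) ∂μ).toReal
          = (∫⁻ ω, ENNReal.ofReal (g ω) ∂μ).toReal - ∫ ω, g ω ∂μ := by
        rw [hgval]; ring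
      rw [this]
      linarith [hbnd]
    calc ∫⁻ ω, (A m).indicator (fun ω' => ENNReal.ofReal (-(W (k + 1) ω'))) ω ∂μ
        = ∫⁻ ω, ENNReal.ofReal (-(g ω)) ∂μ := lintegral_congr hng
      _ = ENNReal.ofReal ((∫⁻ ω, ENNReal.ofReal (-(g ω)) ∂μ).toReal) :=
          (ENNReal.ofReal_toReal hNfin).symm
      _ ≤ ENNReal.ofReal ((∫⁻ ω, ENNReal.ofReal (g ω) ∂μ).toReal + c) :=
          ENNReal.ofReal_le_ofReal htoReal
      _ = ENNReal.ofReal ((∫⁻ ω, ENNReal.ofReal (g ω) ∂μ).toReal) + ENNReal.ofReal c :=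
          ENNReal.ofReal_add ENNReal.toReal_nonneg hc0
      _ = (∫⁻ ω, ENNReal.ofReal (g ω) ∂μ) + ENNReal.ofReal c := by
          rw [ENNReal.ofReal_toReal hPfin]
      _ ≤ (∫⁻ ω, ENNReal.ofReal (W (k + 1) ω) ∂μ) + ENNReal.ofReal c := by
          exact add_le_add (lintegral_mono hpg) le_rfl
  -- monotone convergence for the negative part
  have hAsub : ∀ {a b : ℕ}, a ≤ b → A a ⊆ A b := by
    intro a b hab ω hω
    have hcast : (a : ℝ) ≤ (b : ℝ) := Nat.cast_le.2 hab
    refine ⟨le_trans hω.1 hcast, ?_⟩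
    exact Set.mem_iInter.2 fun t htk => le_trans (Set.mem_iInter.1 hω.2 t htk) hcast
  have hnegmeas : Measurable[mF] fun ω => ENNReal.ofReal (-(W (k + 1) ω)) :=
    ENNReal.measurable_ofReal.comp hWk1.neg
  have hMCT : ∫⁻ ω, ENNReal.ofReal (-(W (k + 1) ω)) ∂μ
      = ⨆ m : ℕ, ∫⁻ ω, (A m).indicator (fun ω' => ENNReal.ofReal (-(W (k + 1) ω'))) ω ∂μ := by
    rw [← lintegral_iSup (fun m => hnegmeas.indicator (hAmF m)) ?mono]
    case mono =>
      intro a b hab ω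
      dsimp only
      by_cases hω : ω ∈ A a
      · rw [Set.indicator_of_mem hω, Set.indicator_of_mem (hAsub hab hω)]
      · rw [Set.indicator_of_notMem hω]; simp
    refine lintegral_congr fun ω => ?_
    refine le_antisymm ?_ (iSup_le fun m => ?_)
    · obtain ⟨m₀, hm₀⟩ := hAmem ω
      calc ENNReal.ofReal (-(W (k + 1) ω))
          = (A m₀).indicator (fun ω' => ENNReal.ofReal (-(W (k + 1) ω'))) ω := by
            rw [Set.indicator_of_mem (hm₀ m₀ le_rfl)]
        _ ≤ ⨆ m : ℕ, (A m).indicator (fun ω' => ENNReal.ofReal (-(W (k + 1) ω'))) ω :=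
            le_iSup (fun m : ℕ => (A m).indicator
              (fun ω' => ENNReal.ofReal (-(W (k + 1) ω'))) ω) m₀
    · by_cases hω : ω ∈ A m
      · rw [Set.indicator_of_mem hω]
      · rw [Set.indicator_of_notMem hω]; simp
  have hNfin' : ∫⁻ ω, ENNReal.ofReal (-(W (k + 1) ω)) ∂μ ≠ ⊤ := by
    rw [hMCT]
    refine ne_top_of_le_ne_top ?_ (iSup_le fun m => hNbound m)
    exact ENNReal.add_ne_top.2 ⟨hfin1, ENNReal.ofReal_ne_top⟩
  -- integrability of W (k + 1)
  have hWk1int : Integrable (W (k + 1)) μ := by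
    refine ⟨hWk1.aestronglyMeasurable, ?_⟩
    rw [hasFiniteIntegral_iff_norm]
    have hpt : ∀ ω, ENNReal.ofReal ‖W (k + 1) ω‖
        ≤ ENNReal.ofReal (W (k + 1) ω) + ENNReal.ofReal (-(W (k + 1) ω)) := by
      intro ω
      rcases le_or_gt 0 (W (k + 1) ω) with hc' | hc'
      · rw [Real.norm_eq_abs, abs_of_nonneg hc']
        exact le_self_add
      · rw [Real.norm_eq_abs, abs_of_neg hc']
        exact le_add_self
    calc ∫⁻ ω, ENNReal.ofReal ‖W (k + 1) ω‖ ∂μ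
        ≤ ∫⁻ ω, (ENNReal.ofReal (W (k + 1) ω) + ENNReal.ofReal (-(W (k + 1) ω))) ∂μ :=
          lintegral_mono hpt
      _ = (∫⁻ ω, ENNReal.ofReal (W (k + 1) ω) ∂μ) + ∫⁻ ω, ENNReal.ofReal (-(W (k + 1) ω)) ∂μ :=
          lintegral_add_left (ENNReal.measurable_ofReal.comp hWk1) _
      _ < ⊤ := by
          rw [lt_top_iff_ne_top]
          exact ENNReal.add_ne_top.2 ⟨hfin1, hNfin'⟩
  refine ⟨hWk1int, ?_⟩
  -- dominated convergence
  have htend1 : Filter.Tendsto (fun m : ℕ => ∫ ω, (A m).indicator (W (k + 1)) ω ∂μ)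
      Filter.atTop (nhds (∫ ω, W (k + 1) ω ∂μ)) := by
    refine tendsto_integral_of_dominated_convergence (fun ω => ‖W (k + 1) ω‖)
      (fun m => (hWk1.indicator (hAmF m)).aestronglyMeasurable) hWk1int.norm
      (fun m => Filter.Eventually.of_forall fun ω => ?_)
      (Filter.Eventually.of_forall fun ω => ?_)
    · by_cases hω : ω ∈ A m
      · rw [Set.indicator_of_mem hω]
      · rw [Set.indicator_of_notMem hω]; simp
    · obtain ⟨m₀, hm₀⟩ := hAmem ω
      refine Filter.Tendsto.congr' ?_ tendsto_const_nhds
      refine Filter.eventually_atTop.2 ⟨m₀, fun m hm => ?_⟩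
      exact (Set.indicator_of_mem (hm₀ m hm) _).symm
  have htend2 : Filter.Tendsto (fun m : ℕ => ∫ ω, (A m).indicator (W k) ω ∂μ)
      Filter.atTop (nhds (∫ ω, W k ω ∂μ)) := by
    refine tendsto_integral_of_dominated_convergence (fun ω => ‖W k ω‖)
      (fun m => (hWk.indicator (hAmF m)).aestronglyMeasurable) hintk.norm
      (fun m => Filter.Eventually.of_forall fun ω => ?_)
      (Filter.Eventually.of_forall fun ω => ?_)
    · by_cases hω : ω ∈ A m
      · rw [Set.indicator_of_mem hω]
      · rw [Set.indicator_of_notMem hω]; simp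
    · obtain ⟨m₀, hm₀⟩ := hAmem ω
      refine Filter.Tendsto.congr' ?_ tendsto_const_nhds
      refine Filter.eventually_atTop.2 ⟨m₀, fun m hm => ?_⟩
      exact (Set.indicator_of_mem (hm₀ m hm) _).symm
  have heqm : ∀ m : ℕ, ∫ ω, (A m).indicator (W (k + 1)) ω ∂μ
      = ∫ ω, (A m).indicator (W k) ω ∂μ := fun m => (hmain m).2.2
  have := tendsto_nhds_unique (htend1.congr fun m => heqm m) htend2
  rw [hzero] at this
  rw [this]

/-- The `h`-free core statement. -/
lemma main0 [IsProbabilityMeasure μ] (hFle : ∀ t, F t ≤ mF) (hFmono : Monotone F)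
    (hxadapted : ∀ t, Measurable[F t] fun ω => x ω t) (hvint : Integrable v μ)
    (hvperp : ∀ z : Ω → ∀ t, Fin (n t) → ℝ, (∀ t, Measurable[F t] fun ω => z ω t) →
      (∃ C : ℝ, ∀ ω, ‖z ω‖ ≤ C) → ∫ ω, ∑ t, ∑ i, z ω t i * v ω t i ∂μ = 0)
    (hpos : ∫⁻ ω, ENNReal.ofReal (∑ t : Fin (T + 1), ∑ i : Fin (n t), x ω t i * v ω t i) ∂μ ≠ ⊤) :
    Integrable (fun ω => ∑ t : Fin (T + 1), ∑ i : Fin (n t), x ω t i * v ω t i) μ ∧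
      ∫ ω, ∑ t : Fin (T + 1), ∑ i : Fin (n t), x ω t i * v ω t i ∂μ = 0 := by
  set W := Wproc (mF := mF) μ F x v with hWdef
  have htop := Wproc_top μ F x v hvint
  have hfintop : ∫⁻ ω, ENNReal.ofReal (W (T + 1) ω) ∂μ ≠ ⊤ := by
    rw [lintegral_congr_ae (htop.mono fun ω hω => congrArg ENNReal.ofReal hω)]
    exact hpos
  have hPfin : ∀ d k, k + d = T + 1 → ∫⁻ ω, ENNReal.ofReal (W k ω) ∂μ ≠ ⊤ := by
    intro d
    induction d with
    | zero =>
        intro k hk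
        have hkeq : k = T + 1 := by omega
        rw [hkeq]
        exact hfintop
    | succ d ih =>
        intro k hk
        have hk' : (k + 1) + d = T + 1 := by omega
        exact Wproc_posfin_step μ F x v hFle hFmono hxadapted hvint hvperp (by omega) (ih (k + 1) hk')
  have hfin : ∀ k, k ≤ T + 1 → ∫⁻ ω, ENNReal.ofReal (W k ω) ∂μ ≠ ⊤ :=
    fun k hk => hPfin (T + 1 - k) k (by omega)
  have hP : ∀ k, k ≤ T + 1 → Integrable (W k) μ ∧ ∫ ω, W k ω ∂μ = 0 := by
    intro k
    induction k with
    | zero =>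
        intro _
        have h0 : W 0 = fun _ => (0 : ℝ) := Wproc_zero μ F x v
        constructor
        · rw [h0]; exact integrable_const 0
        · rw [h0]; simp
    | succ k ih =>
        intro hk1
        have hk : k ≤ T := by omega
        obtain ⟨h1, h2⟩ := ih (by omega)
        exact Wproc_int_step μ F x v hFle hFmono hxadapted hvint hvperp hk
          (hfin (k + 1) (by omega)) h1 h2
  obtain ⟨hI, hz⟩ := hP (T + 1) le_rfl
  constructor
  · exact hI.congr htop
  · rw [← integral_congr_ae htop]
    exact hz

end Aux

/-- if `x ∈ N` with `E[h(x)] < ∞` and `v ∈ N^⊥` with `E[h*(v)] < ∞`, then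
`x·v` is integrable and `E(x·v) = 0`. -/
theorem stmt4 {T : ℕ} {n : Fin (T + 1) → ℕ} {Ω : Type*} [mF : MeasurableSpace Ω]
    (μ : Measure Ω) [IsProbabilityMeasure μ]
    (F : Fin (T + 1) → MeasurableSpace Ω) (hFle : ∀ t, F t ≤ mF) (hFmono : Monotone F)
    (h : (∀ t, Fin (n t) → ℝ) → Ω → EReal)
    (hmeas : Measurable[(inferInstance : MeasurableSpace (∀ t, Fin (n t) → ℝ)).prod mF]
      (Function.uncurry h))
    (hlsc : ∀ ω, LowerSemicontinuous (fun y => h y ω))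
    (hconv : ∀ ω, ∀ y z : ∀ t, Fin (n t) → ℝ, ∀ a b : ℝ, 0 ≤ a → 0 ≤ b → a + b = 1 →
      h (a • y + b • z) ω ≤ (a : EReal) * h y ω + (b : EReal) * h z ω)
    (hproper : ∀ ω, (∃ y, h y ω ≠ ⊤) ∧ ∀ y, h y ω ≠ ⊥)
    -- `x ∈ N` (adapted) with `E[h(x)] < ∞`
    (x : Ω → ∀ t, Fin (n t) → ℝ) (hxadapted : ∀ t, Measurable[F t] fun ω => x ω t)
    (hxfin : @eexp Ω mF μ (fun ω => h (x ω) ω) ≠ ⊤)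
    -- `v ∈ N^⊥ ⊆ L¹` with `E[h*(v)] < ∞`
    (v : Ω → ∀ t, Fin (n t) → ℝ) (hvint : Integrable v μ)
    (hvperp : ∀ z : Ω → ∀ t, Fin (n t) → ℝ, (∀ t, Measurable[F t] fun ω => z ω t) →
      (∃ C : ℝ, ∀ ω, ‖z ω‖ ≤ C) → ∫ ω, ∑ t, ∑ i, z ω t i * v ω t i ∂μ = 0)
    (hvfin : @eexp Ω mF μ (fun ω => ⨆ y : ∀ t, Fin (n t) → ℝ,
      (((∑ t, ∑ i, y t i * v ω t i : ℝ) : EReal) - h y ω)) ≠ ⊤) :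
    Integrable (fun ω => ∑ t, ∑ i, x ω t i * v ω t i) μ ∧
      ∫ ω, ∑ t, ∑ i, x ω t i * v ω t i ∂μ = 0 := by
  classical
  have hxm : ∀ t, Measurable fun ω => x ω t := fun t => (hxadapted t).mono (hFle t) le_rfl
  have hxmeas : Measurable x := measurable_pi_lambda _ hxm
  have hHxm : Measurable fun ω => h (x ω) ω := by
    have hpair : Measurable fun ω => (x ω, ω) := hxmeas.prodMk measurable_id
    exact hmeas.comp hpair
  have heposm : Measurable epos := by
    have h1 : Measurable fun y : EReal => ENNReal.ofReal y.toReal :=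
      ENNReal.measurable_ofReal.comp measurable_ereal_toReal
    have h2 : epos = fun y : EReal => if y = ⊤ then ⊤ else ENNReal.ofReal y.toReal := rfl
    rw [h2]
    exact Measurable.ite (measurableSet_singleton ⊤) measurable_const h1
  have hfinx : ∫⁻ ω, epos (h (x ω) ω) ∂μ ≠ ⊤ := eexp_ne_top μ _ hxfin
  set G : Ω → EReal := fun ω => ⨆ y : ∀ t, Fin (n t) → ℝ,
    (((∑ t, ∑ i, y t i * v ω t i : ℝ) : EReal) - h y ω) with hGdef
  have hfinv : ∫⁻ ω, epos (G ω) ∂μ ≠ ⊤ := eexp_ne_top μ _ hvfin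
  have hpoint : ∀ ω, ENNReal.ofReal (∑ t, ∑ i, x ω t i * v ω t i)
      ≤ epos (h (x ω) ω) + epos (G ω) := by
    intro ω
    set c : ℝ := ∑ t, ∑ i, x ω t i * v ω t i with hcdef
    have hle : ((c : ℝ) : EReal) - h (x ω) ω ≤ G ω :=
      le_iSup (fun y : ∀ t, Fin (n t) → ℝ =>
        (((∑ t, ∑ i, y t i * v ω t i : ℝ) : EReal) - h y ω)) (x ω)
    by_cases hH : h (x ω) ω = ⊤
    · have e : epos (h (x ω) ω) = ⊤ := by rw [hH]; rfl
      rw [e, top_add]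
      exact le_top
    by_cases hG : G ω = ⊤
    · have e : epos (G ω) = ⊤ := by rw [hG]; rfl
      rw [e, add_top]
      exact le_top
    have hHb : h (x ω) ω ≠ ⊥ := (hproper ω).2 _
    have hGb : G ω ≠ ⊥ := by
      obtain ⟨y₀, hy₀⟩ := (hproper ω).1
      have hy₀b : h y₀ ω ≠ ⊥ := (hproper ω).2 y₀
      intro hb
      have h2 : ((∑ t, ∑ i, y₀ t i * v ω t i : ℝ) : EReal) - h y₀ ω ≤ G ω :=
        le_iSup (fun y : ∀ t, Fin (n t) → ℝ =>
          (((∑ t, ∑ i, y t i * v ω t i : ℝ) : EReal) - h y ω)) y₀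
      rw [hb, le_bot_iff] at h2
      have h3 : h y₀ ω = (((h y₀ ω).toReal : ℝ) : EReal) := (EReal.coe_toReal hy₀ hy₀b).symm
      rw [h3, ← EReal.coe_sub] at h2
      exact (EReal.coe_ne_bot _) h2
    set a : ℝ := (h (x ω) ω).toReal with hadef
    set g : ℝ := (G ω).toReal with hgdef
    have ha : h (x ω) ω = (a : EReal) := (EReal.coe_toReal hH hHb).symm
    have hg : G ω = (g : EReal) := (EReal.coe_toReal hG hGb).symm
    rw [ha, hg, ← EReal.coe_sub, EReal.coe_le_coe_iff] at hle
    have hcle : c ≤ a + g := by linarith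
    have e1 : epos (h (x ω) ω) = ENNReal.ofReal a := by
      rw [ha]; simp [epos]
    have e2 : epos (G ω) = ENNReal.ofReal g := by
      rw [hg]; simp [epos]
    rw [e1, e2]
    calc ENNReal.ofReal c ≤ ENNReal.ofReal (a + g) := ENNReal.ofReal_le_ofReal hcle
      _ ≤ ENNReal.ofReal a + ENNReal.ofReal g := ENNReal.ofReal_add_le
  have hpos : ∫⁻ ω, ENNReal.ofReal (∑ t : Fin (T + 1), ∑ i : Fin (n t), x ω t i * v ω t i) ∂μ
      ≠ ⊤ := by
    refine ne_top_of_le_ne_top ?_ (lintegral_mono hpoint)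
    rw [lintegral_add_left (f := fun ω => epos (h (x ω) ω)) (heposm.comp hHxm)]
    exact ENNReal.add_ne_top.2 ⟨hfinx, hfinv⟩
  exact main0 μ F x v hFle hFmono hxadapted hvint hvperp hpos
end

section
/- Let C(ω) ⊆ ℝᵈ be a measurable closed convex-valued mapping on a probability space, and suppose 0 ∈ D where D = {x ∈ L^∞ : x(ω) ∈ C(ω) a.s. and ∃r>0 with B(x(ω),r) ∩ aff C(ω) ⊆ C(ω) a.s.}. Then the affine hull of D in L^∞ equals L^∞(aff C) = {x ∈ L^∞ : x(ω) ∈ aff C(ω) a.s.}, which is a norm-closed subspace of L^∞, and D coincides with the relative strong interior of L^∞(C) = {x ∈ L^∞ : x(ω) ∈ C(ω) a.s.}. -/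
open MeasureTheory
open scoped ENNReal

/-- `L^∞(S)`: bounded measurable functions with values a.s. in `S(ω)`. -/
def LinfOf {d : ℕ} {Ω : Type*} [MeasurableSpace Ω] (μ : Measure Ω)
    (S : Ω → Set (Fin d → ℝ)) : Set (Ω → Fin d → ℝ) :=
  {x | Measurable x ∧ (∃ C : ℝ, ∀ ω, ‖x ω‖ ≤ C) ∧ ∀ᵐ ω ∂μ, x ω ∈ S ω}

/-- The set `D` of bounded measurable selections lying uniformly in the relative
interior of `C(ω)`. -/
def Dset {d : ℕ} {Ω : Type*} [MeasurableSpace Ω] (μ : Measure Ω)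
    (C : Ω → Set (Fin d → ℝ)) : Set (Ω → Fin d → ℝ) :=
  {x | Measurable x ∧ (∃ Cb : ℝ, ∀ ω, ‖x ω‖ ≤ Cb) ∧ (∀ᵐ ω ∂μ, x ω ∈ C ω) ∧
    ∃ r : ℝ, 0 < r ∧ ∀ᵐ ω ∂μ, ∀ y : Fin d → ℝ, ‖y - x ω‖ ≤ r →
      y ∈ (affineSpan ℝ (C ω) : Set (Fin d → ℝ)) → y ∈ C ω}

/-!
Since `0 ∈ D` with a uniform radius `r`, every `x ∈ L^∞(aff C)` has a small positive multiple
`c • x` in `D`; as `0 ∈ D` too, `x = c⁻¹ • (c • x)` lies in `aff D`. If `x` lies in the relative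
strong interior of `L^∞(C)`, the pushed-out point `(1 + t) • x` is still in `L^∞(C)`, and `x` lies
on the segment from it to `0`, so convexity of `C(ω)` turns the uniform relative ball around `0`
into one of radius `t r / (1 + t)` around `x`. Closedness of `L^∞(aff C)` is pointwise closedness
of the finite-dimensional affine hulls.
-/

lemma AffineSubspace.smul_mem_of_zero_mem {k V : Type*} [Ring k] [AddCommGroup V] [Module k V]
    {s : AffineSubspace k V} (h0 : (0 : V) ∈ s) (c : k) {v : V} (hv : v ∈ s) : c • v ∈ s := by
  simpa using s.smul_vsub_vadd_mem c hv h0 h0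

lemma forall_mem_of_norm_sub_le_of_le {E : Type*} [SeminormedAddCommGroup E] {A C : Set E}
    {x v : E} {r ρ : ℝ} (hx : ∀ y, ‖y - x‖ ≤ r → y ∈ A → y ∈ C) (hv : ‖v - x‖ + ρ ≤ r) :
    ∀ y, ‖y - v‖ ≤ ρ → y ∈ A → y ∈ C := fun y hy =>
  hx y (by linarith [norm_sub_le_norm_sub_add_norm_sub y v x])

/-- The relative-interior analogue of `Convex.combo_interior_self_subset_interior`. -/
lemma Convex.forall_mem_of_norm_sub_combo_le {E : Type*} [NormedAddCommGroup E]
    [NormedSpace ℝ E] {C : Set E} (hC : Convex ℝ C) {A : AffineSubspace ℝ E} {p q : E} {r s : ℝ}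
    (hp : p ∈ C) (hpA : p ∈ A) (hq : ∀ y, ‖y - q‖ ≤ r → y ∈ A → y ∈ C) (hs0 : 0 < s)
    (hs1 : s ≤ 1) : ∀ y, ‖y - ((1 - s) • p + s • q)‖ ≤ s * r → y ∈ A → y ∈ C := by
  intro y hy hyA
  set w := s⁻¹ • (y -ᵥ p) +ᵥ p
  have hwA : w ∈ A := A.smul_vsub_vadd_mem _ hyA hpA hpA
  have hyw : y = (1 - s) • p + s • w := by
    simp only [w, vsub_eq_sub, vadd_eq_add, smul_add, smul_smul, mul_inv_cancel₀ hs0.ne',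
      one_smul, sub_smul]
    abel
  have hwq : s * ‖w - q‖ = ‖y - ((1 - s) • p + s • q)‖ := by
    rw [hyw, add_sub_add_left_eq_sub, ← smul_sub, norm_smul, Real.norm_of_nonneg hs0.le]
  have hwC : w ∈ C := hq w (le_of_mul_le_mul_left (hwq ▸ hy) hs0) hwA
  rw [hyw]
  exact hC hp hwC (by linarith) hs0.le (by ring)

section Linf

variable {d : ℕ} {Ω : Type*} [MeasurableSpace Ω] {μ : Measure Ω}

def linfAffineSubspace (μ : Measure Ω) (A : Ω → AffineSubspace ℝ (Fin d → ℝ)) :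
    AffineSubspace ℝ (Ω → Fin d → ℝ) where
  carrier := LinfOf μ fun ω => A ω
  smul_vsub_vadd_mem' := by
    rintro c x y z ⟨hxm, ⟨Cx, hxb⟩, hxA⟩ ⟨hym, ⟨Cy, hyb⟩, hyA⟩ ⟨hzm, ⟨Cz, hzb⟩, hzA⟩
    refine ⟨((hxm.sub hym).const_smul c).add hzm, ⟨‖c‖ * (Cx + Cy) + Cz, fun ω => ?_⟩, ?_⟩
    · calc ‖c • (x ω - y ω) + z ω‖ ≤ ‖c‖ * (‖x ω‖ + ‖y ω‖) + ‖z ω‖ := by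
            grw [norm_add_le, norm_smul, norm_sub_le]
        _ ≤ ‖c‖ * (Cx + Cy) + Cz := by grw [hxb ω, hyb ω, hzb ω]
    · filter_upwards [hxA, hyA, hzA] with ω hx hy hz
      exact (A ω).smul_vsub_vadd_mem c hx hy hz

lemma Dset_subset_LinfOf_affineSpan (C : Ω → Set (Fin d → ℝ)) :
    Dset μ C ⊆ LinfOf μ fun ω => (affineSpan ℝ (C ω) : Set (Fin d → ℝ)) :=
  fun _ ⟨hxm, hxb, hxC, _⟩ => ⟨hxm, hxb, hxC.mono fun _ h => subset_affineSpan ℝ _ h⟩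

lemma exists_pos_smul_mem_Dset {C : Ω → Set (Fin d → ℝ)} (h0 : (0 : Ω → Fin d → ℝ) ∈ Dset μ C)
    {x : Ω → Fin d → ℝ} (hx : x ∈ LinfOf μ fun ω => (affineSpan ℝ (C ω) : Set (Fin d → ℝ))) :
    ∃ c : ℝ, 0 < c ∧ c • x ∈ Dset μ C := by
  obtain ⟨-, -, h0C, r, hr, hball⟩ := h0
  obtain ⟨hxm, ⟨M, hM⟩, hxA⟩ := hx
  set c := r / (2 * (max M 0 + 1))
  have hc : 0 < c := by positivity
  have hcx : ∀ ω, ‖c • x ω‖ ≤ r / 2 := fun ω => by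
    rw [norm_smul, Real.norm_of_nonneg hc.le]
    calc c * ‖x ω‖ ≤ c * (max M 0 + 1) := by grw [hM ω, ← le_max_left M 0]; linarith
      _ = r / 2 := by simp only [c]; field_simp
  refine ⟨c, hc, hxm.const_smul c, ⟨r / 2, hcx⟩, ?_, r / 2, by positivity, ?_⟩
  · filter_upwards [hxA, hball, h0C] with ω hxω hbω h0ω
    exact hbω _ (by simpa using (hcx ω).trans (by linarith))
      ((affineSpan ℝ _).smul_mem_of_zero_mem (subset_affineSpan ℝ _ h0ω) c hxω)
  · filter_upwards [hball] with ω hbω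
    refine forall_mem_of_norm_sub_le_of_le hbω ?_
    rw [Pi.zero_apply, sub_zero, Pi.smul_apply]
    linarith [hcx ω]

lemma affineSpan_Dset_eq {C : Ω → Set (Fin d → ℝ)} (h0 : (0 : Ω → Fin d → ℝ) ∈ Dset μ C) :
    (affineSpan ℝ (Dset μ C) : Set (Ω → Fin d → ℝ))
      = LinfOf μ fun ω => (affineSpan ℝ (C ω) : Set (Fin d → ℝ)) := by
  refine subset_antisymm (affineSpan_le (Q := linfAffineSubspace μ fun ω => affineSpan ℝ (C ω))
    |>.mpr (Dset_subset_LinfOf_affineSpan C)) fun x hx => ?_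
  obtain ⟨c, hc, hcx⟩ := exists_pos_smul_mem_Dset h0 hx
  simpa [smul_smul, hc.ne'] using (affineSpan ℝ (Dset μ C)).smul_mem_of_zero_mem
    (subset_affineSpan ℝ _ h0) c⁻¹ (subset_affineSpan ℝ _ hcx)

lemma mem_LinfOf_of_ae_uniform_limit {S : Ω → Set (Fin d → ℝ)} (hS : ∀ ω, IsClosed (S ω))
    {zs : ℕ → Ω → Fin d → ℝ} {z : Ω → Fin d → ℝ} (hzs : ∀ k, zs k ∈ LinfOf μ S)
    (hzm : Measurable z) (hzb : ∃ Cb : ℝ, ∀ ω, ‖z ω‖ ≤ Cb)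
    (hlim : ∀ ε : ℝ, 0 < ε → ∃ N : ℕ, ∀ k ≥ N, ∀ᵐ ω ∂μ, ‖zs k ω - z ω‖ ≤ ε) :
    z ∈ LinfOf μ S := by
  choose N hN using fun n : ℕ => hlim (1 / (n + 1)) n.one_div_pos_of_nat
  have hclose : ∀ᵐ ω ∂μ, ∀ n : ℕ, ‖zs (N n) ω - z ω‖ ≤ 1 / (n + 1) :=
    ae_all_iff.mpr fun n => hN n (N n) le_rfl
  have hmem : ∀ᵐ ω ∂μ, ∀ k, zs k ω ∈ S ω := ae_all_iff.mpr fun k => (hzs k).2.2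
  refine ⟨hzm, hzb, ?_⟩
  filter_upwards [hclose, hmem] with ω hcω hmω
  refine (hS ω).mem_of_tendsto (b := Filter.atTop) (f := fun n => zs (N n) ω) ?_
    (.of_forall fun n => hmω _)
  exact tendsto_iff_norm_sub_tendsto_zero.mpr <|
    squeeze_zero (fun _ => norm_nonneg _) hcω tendsto_one_div_add_atTop_nhds_zero_nat

lemma mem_Dset_of_forall_near_mem_LinfOf {C : Ω → Set (Fin d → ℝ)} (hC : ∀ ω, Convex ℝ (C ω))
    (h0 : (0 : Ω → Fin d → ℝ) ∈ Dset μ C) {x : Ω → Fin d → ℝ} (hx : x ∈ LinfOf μ C) {ε : ℝ}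
    (hε : 0 < ε) (hnear : ∀ y ∈ LinfOf μ (fun ω => (affineSpan ℝ (C ω) : Set (Fin d → ℝ))),
      (∀ᵐ ω ∂μ, ‖y ω - x ω‖ ≤ ε) → y ∈ LinfOf μ C) :
    x ∈ Dset μ C := by
  have h0A := Dset_subset_LinfOf_affineSpan C h0
  obtain ⟨-, -, -, r, hr, hball⟩ := h0
  obtain ⟨hxm, ⟨M, hM⟩, hxC⟩ := hx
  set t := ε / (max M 0 + 1)
  have ht : 0 < t := by positivity
  have hpush : (1 + t) • x ∈ LinfOf μ C := by
    refine hnear _ ((linfAffineSubspace μ fun ω => affineSpan ℝ (C ω)).smul_mem_of_zero_mem h0A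
      _ ⟨hxm, ⟨M, hM⟩, hxC.mono fun _ h => subset_affineSpan ℝ _ h⟩) (.of_forall fun ω => ?_)
    rw [Pi.smul_apply, add_smul, one_smul, add_sub_cancel_left, norm_smul,
      Real.norm_of_nonneg ht.le]
    calc t * ‖x ω‖ ≤ t * (max M 0 + 1) := by grw [hM ω, ← le_max_left M 0]; linarith
      _ = ε := by simp only [t]; field_simp
  set s := t / (1 + t)
  have hs0 : 0 < s := by positivity
  have hs1 : s ≤ 1 := div_le_one_of_le₀ (by linarith) (by positivity)
  refine ⟨hxm, ⟨M, hM⟩, hxC, s * r, by positivity, ?_⟩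
  filter_upwards [hpush.2.2, hball] with ω hpω hbω
  simp only [Pi.zero_apply] at hbω
  have hst : (1 - s) * (1 + t) = 1 := by
    simp only [s]
    field_simp
    ring
  have hxω : x ω = (1 - s) • ((1 + t) • x ω) + s • 0 := by
    rw [smul_zero, add_zero, smul_smul, hst, one_smul]
  rw [hxω]
  exact (hC ω).forall_mem_of_norm_sub_combo_le hpω (subset_affineSpan ℝ _ hpω) hbω hs0 hs1

lemma Dset_eq_relInterior {C : Ω → Set (Fin d → ℝ)} (hC : ∀ ω, Convex ℝ (C ω))
    (h0 : (0 : Ω → Fin d → ℝ) ∈ Dset μ C) :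
    Dset μ C = {x ∈ LinfOf μ C | ∃ ε : ℝ, 0 < ε ∧
      ∀ y ∈ LinfOf μ (fun ω => (affineSpan ℝ (C ω) : Set (Fin d → ℝ))),
        (∀ᵐ ω ∂μ, ‖y ω - x ω‖ ≤ ε) → y ∈ LinfOf μ C} := by
  ext x
  constructor
  · rintro ⟨hxm, hxb, hxC, ρ, hρ, hρball⟩
    refine ⟨⟨hxm, hxb, hxC⟩, ρ, hρ, fun y ⟨hym, hyb, hyA⟩ hyx => ⟨hym, hyb, ?_⟩⟩
    filter_upwards [hyA, hyx, hρball] with ω hyAω hyxω hρω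
    exact hρω _ hyxω hyAω
  · rintro ⟨hx, ε, hε, hnear⟩
    exact mem_Dset_of_forall_near_mem_LinfOf hC h0 hx hε hnear

end Linf

theorem stmt10_general {d : ℕ} {Ω : Type*} [mF : MeasurableSpace Ω]
    (μ : Measure Ω)
    (C : Ω → Set (Fin d → ℝ))
    (hCconv : ∀ ω, Convex ℝ (C ω))
    (h0D : (0 : Ω → Fin d → ℝ) ∈ Dset μ C) :
    -- (1) the affine hull of `D` is `L^∞(aff C)`
    ((affineSpan ℝ (Dset μ C) : Set (Ω → Fin d → ℝ))
        = LinfOf μ (fun ω => (affineSpan ℝ (C ω) : Set (Fin d → ℝ)))) ∧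
    -- (2) `L^∞(aff C)` is norm-closed: stable under a.e.-uniform limits
    (∀ (zs : ℕ → Ω → Fin d → ℝ) (z : Ω → Fin d → ℝ),
      (∀ k, zs k ∈ LinfOf μ (fun ω => (affineSpan ℝ (C ω) : Set (Fin d → ℝ)))) →
      Measurable z → (∃ Cb : ℝ, ∀ ω, ‖z ω‖ ≤ Cb) →
      (∀ ε : ℝ, 0 < ε → ∃ N : ℕ, ∀ k ≥ N, ∀ᵐ ω ∂μ, ‖zs k ω - z ω‖ ≤ ε) →
      z ∈ LinfOf μ (fun ω => (affineSpan ℝ (C ω) : Set (Fin d → ℝ)))) ∧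
    -- (3) `D` is the relative strong interior of `L^∞(C)`
    (Dset μ C = {x ∈ LinfOf μ C | ∃ ε : ℝ, 0 < ε ∧
      ∀ y ∈ LinfOf μ (fun ω => (affineSpan ℝ (C ω) : Set (Fin d → ℝ))),
        (∀ᵐ ω ∂μ, ‖y ω - x ω‖ ≤ ε) → y ∈ LinfOf μ C}) :=
  ⟨affineSpan_Dset_eq h0D,
    fun _ _ hzs hzm hzb hlim => mem_LinfOf_of_ae_uniform_limit
      (fun ω => (affineSpan ℝ (C ω)).closed_of_finiteDimensional) hzs hzm hzb hlim,
    Dset_eq_relInterior hCconv h0D⟩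

/-- if `0 ∈ D` then `aff D = L^∞(aff C)`, this set is closed under
(a.e.-uniform) limits in `L^∞`, and `D` is the relative strong interior of `L^∞(C)`. -/
theorem stmt10 {d : ℕ} {Ω : Type*} [mF : MeasurableSpace Ω]
    (μ : Measure Ω) [IsProbabilityMeasure μ]
    (C : Ω → Set (Fin d → ℝ))
    (hCclosed : ∀ ω, IsClosed (C ω)) (hCconv : ∀ ω, Convex ℝ (C ω))
    (hCmeas : MeasurableSet {p : Ω × (Fin d → ℝ) | p.2 ∈ C p.1})
    (h0D : (0 : Ω → Fin d → ℝ) ∈ Dset μ C) :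
    -- (1) the affine hull of `D` is `L^∞(aff C)`
    ((affineSpan ℝ (Dset μ C) : Set (Ω → Fin d → ℝ))
        = LinfOf μ (fun ω => (affineSpan ℝ (C ω) : Set (Fin d → ℝ)))) ∧
    -- (2) `L^∞(aff C)` is norm-closed: stable under a.e.-uniform limits
    (∀ (zs : ℕ → Ω → Fin d → ℝ) (z : Ω → Fin d → ℝ),
      (∀ k, zs k ∈ LinfOf μ (fun ω => (affineSpan ℝ (C ω) : Set (Fin d → ℝ)))) →
      Measurable z → (∃ Cb : ℝ, ∀ ω, ‖z ω‖ ≤ Cb) →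
      (∀ ε : ℝ, 0 < ε → ∃ N : ℕ, ∀ k ≥ N, ∀ᵐ ω ∂μ, ‖zs k ω - z ω‖ ≤ ε) →
      z ∈ LinfOf μ (fun ω => (affineSpan ℝ (C ω) : Set (Fin d → ℝ)))) ∧
    -- (3) `D` is the relative strong interior of `L^∞(C)`
    (Dset μ C = {x ∈ LinfOf μ C | ∃ ε : ℝ, 0 < ε ∧
      ∀ y ∈ LinfOf μ (fun ω => (affineSpan ℝ (C ω) : Set (Fin d → ℝ))),
        (∀ᵐ ω ∂μ, ‖y ω - x ω‖ ≤ ε) → y ∈ LinfOf μ C}) :=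
  stmt10_general (mF := mF) μ C hCconv h0D
end

section
/- Let f be a convex normal integrand on ℝⁿ×Ω with filtration (F_t)_{t=0}^T, and let x ∈ N^∞ (bounded adapted). If v ∈ L¹ is a measurable selection of ∂f(x), i.e. v(ω) ∈ ∂f(x(ω),ω) a.s., then the adapted projection ᵒv defined by (ᵒv)_t = E[v_t | F_t] is a subgradient of the integral functional Ef restricted to N^∞ at x: Ef(x') ≥ Ef(x) + E(x'·ᵒv − x·ᵒv) for all x' ∈ N^∞. -/
open MeasureTheory
open scoped ENNReal

/-- Pairing `x·y = ∑_t x_t·y_t` on `∏_t ℝ^{n_t}`. -/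
noncomputable def dotp {T : ℕ} {n : Fin (T + 1) → ℕ} (x y : ∀ t, Fin (n t) → ℝ) : ℝ :=
  ∑ t, ∑ i, x t i * y t i

/-- The value function `φ(z) = inf_{x ∈ N} E h(x + z)` of (SP), where the infimum is over
all adapted strategies. -/
noncomputable def phiSP {T : ℕ} {n : Fin (T + 1) → ℕ} {Ω : Type*} (mF : MeasurableSpace Ω)
    (μ : @Measure Ω mF) (F : Fin (T + 1) → MeasurableSpace Ω)
    (h : (∀ t, Fin (n t) → ℝ) → Ω → EReal) (z : Ω → ∀ t, Fin (n t) → ℝ) : EReal :=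
  ⨅ x : {x : Ω → ∀ t, Fin (n t) → ℝ // ∀ t, Measurable[F t] fun ω => x ω t},
    @eexp Ω mF μ (fun ω => h (x.1 ω + z ω) ω)

/-- Adapted (optional) projection: `(ᵒv)_t = E[v_t | F_t]`. -/
noncomputable def aproj {T : ℕ} {n : Fin (T + 1) → ℕ} {Ω : Type*} (mF : MeasurableSpace Ω)
    (μ : @Measure Ω mF) (F : Fin (T + 1) → MeasurableSpace Ω)
    (v : Ω → ∀ t, Fin (n t) → ℝ) : Ω → ∀ t, Fin (n t) → ℝ :=
  fun ω t => (MeasureTheory.condExp (α := Ω) (E := Fin (n t) → ℝ) (m₀ := mF) (F t) μ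
    (fun ω' => v ω' t)) ω

/-! By the tower property, `E[w · ᵒv] = E[w · v]` for every bounded adapted `w`; for
`w = x' - x` the pairing term is therefore `E[(x' - x) · v]`. Shifting by an integrable real
function commutes with the extended expectation, so the claim is the expectation of the
pointwise subgradient inequality `f(x) + (x' - x) · v ≤ f(x')`. -/

namespace EReal

lemma toENNReal_le_toENNReal_add_enorm {a b : EReal} {r : ℝ} (h : a ≤ b + r) :
    a.toENNReal ≤ b.toENNReal + ‖r‖ₑ :=
  calc a.toENNReal ≤ (b + r).toENNReal := toENNReal_le_toENNReal h
    _ ≤ b.toENNReal + (r : EReal).toENNReal := toENNReal_add_le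
    _ ≤ b.toENNReal + ‖r‖ₑ := by
      gcongr
      rw [toENNReal_of_ne_top (coe_ne_top r), toReal_coe, Real.enorm_eq_ofReal_abs]
      exact ENNReal.ofReal_le_ofReal (le_abs_self r)

lemma toReal_eq_toENNReal_sub (a : EReal) :
    a.toReal = a.toENNReal.toReal - (-a).toENNReal.toReal := by
  induction a using EReal.rec with
  | coe r =>
    rw [← coe_neg, toENNReal_of_ne_top (coe_ne_top _), toENNReal_of_ne_top (coe_ne_top _)]
    simp [ENNReal.toReal_ofReal']
  | _ => simp

end EReal

section ExtendedExpectation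

variable {Ω : Type*} [MeasurableSpace Ω] {μ : Measure Ω} {A B : Ω → EReal} {g : Ω → ℝ}

lemma eexp_of_lintegral_eq_top (h : ∫⁻ ω, (A ω).toENNReal ∂μ = ⊤) : eexp μ A = ⊤ :=
  if_pos h

lemma eexp_of_lintegral_ne_top (h : ∫⁻ ω, (A ω).toENNReal ∂μ ≠ ⊤) :
    eexp μ A = ((∫⁻ ω, (A ω).toENNReal ∂μ : ℝ≥0∞) : EReal)
      - ((∫⁻ ω, (-A ω).toENNReal ∂μ : ℝ≥0∞) : EReal) :=
  if_neg h

lemma eexp_mono_ae (h : ∀ᵐ ω ∂μ, A ω ≤ B ω) : eexp μ A ≤ eexp μ B := by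
  by_cases hB : ∫⁻ ω, (B ω).toENNReal ∂μ = ⊤
  · rw [eexp_of_lintegral_eq_top hB]
    exact le_top
  have hP : ∫⁻ ω, (A ω).toENNReal ∂μ ≤ ∫⁻ ω, (B ω).toENNReal ∂μ :=
    lintegral_mono_ae (h.mono fun ω hω => EReal.toENNReal_le_toENNReal hω)
  have hN : ∫⁻ ω, (-B ω).toENNReal ∂μ ≤ ∫⁻ ω, (-A ω).toENNReal ∂μ :=
    lintegral_mono_ae <| h.mono fun ω hω =>
      EReal.toENNReal_le_toENNReal (EReal.neg_le_neg_iff.2 hω)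
  rw [eexp_of_lintegral_ne_top hB, eexp_of_lintegral_ne_top (ne_top_of_le_ne_top hB hP)]
  exact EReal.sub_le_sub (EReal.coe_ennreal_le_coe_ennreal_iff.2 hP)
    (EReal.coe_ennreal_le_coe_ennreal_iff.2 hN)

lemma integrable_toReal_of_lintegral_toENNReal_ne_top (hA : AEMeasurable A μ)
    (hP : ∫⁻ ω, (A ω).toENNReal ∂μ ≠ ⊤) (hN : ∫⁻ ω, (-A ω).toENNReal ∂μ ≠ ⊤) :
    Integrable (fun ω => (A ω).toReal) μ := by
  simp_rw [EReal.toReal_eq_toENNReal_sub]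
  exact (integrable_toReal_of_lintegral_ne_top hA.ereal_toENNReal hP).sub
    (integrable_toReal_of_lintegral_ne_top hA.neg.ereal_toENNReal hN)

lemma eexp_eq_integral_toReal (hA : AEMeasurable A μ)
    (hP : ∫⁻ ω, (A ω).toENNReal ∂μ ≠ ⊤) (hN : ∫⁻ ω, (-A ω).toENNReal ∂μ ≠ ⊤) :
    eexp μ A = ((∫ ω, (A ω).toReal ∂μ : ℝ) : EReal) := by
  have hPm : AEMeasurable (fun ω => (A ω).toENNReal) μ := hA.ereal_toENNReal
  have hNm : AEMeasurable (fun ω => (-A ω).toENNReal) μ := hA.neg.ereal_toENNReal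
  simp_rw [EReal.toReal_eq_toENNReal_sub]
  rw [integral_sub (integrable_toReal_of_lintegral_ne_top hPm hP)
    (integrable_toReal_of_lintegral_ne_top hNm hN), integral_toReal hPm (ae_lt_top' hPm hP),
    integral_toReal hNm (ae_lt_top' hNm hN), eexp_of_lintegral_ne_top hP, EReal.coe_sub,
    EReal.coe_ennreal_toReal hP, EReal.coe_ennreal_toReal hN]

lemma lintegral_toENNReal_ne_top_of_le_add (hg : Integrable g μ) (h : ∀ ω, A ω ≤ B ω + g ω)
    (hB : ∫⁻ ω, (B ω).toENNReal ∂μ ≠ ⊤) : ∫⁻ ω, (A ω).toENNReal ∂μ ≠ ⊤ := by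
  refine ne_top_of_le_ne_top (ENNReal.add_ne_top.2 ⟨hB, hg.2.ne⟩) ?_
  exact (lintegral_mono fun ω => EReal.toENNReal_le_toENNReal_add_enorm (h ω)).trans_eq
    (lintegral_add_right' _ hg.aemeasurable.enorm)

lemma lintegral_toENNReal_add_coe_ne_top_iff (hg : Integrable g μ) :
    ∫⁻ ω, (A ω + g ω).toENNReal ∂μ ≠ ⊤ ↔ ∫⁻ ω, (A ω).toENNReal ∂μ ≠ ⊤ := by
  refine ⟨lintegral_toENNReal_ne_top_of_le_add hg.neg fun ω => ?_,
    lintegral_toENNReal_ne_top_of_le_add hg fun _ => le_rfl⟩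
  rw [Pi.neg_apply, EReal.coe_neg, ← sub_eq_add_neg, EReal.add_sub_cancel_right]

lemma eexp_add_coe (hA : AEMeasurable A μ) (hg : Integrable g μ) :
    eexp μ (fun ω => A ω + g ω) = eexp μ A + ((∫ ω, g ω ∂μ : ℝ) : EReal) := by
  have hPiff := lintegral_toENNReal_add_coe_ne_top_iff (A := A) hg
  have hNiff : ∫⁻ ω, (-(A ω + g ω)).toENNReal ∂μ ≠ ⊤ ↔ ∫⁻ ω, (-A ω).toENNReal ∂μ ≠ ⊤ := by
    have hneg (ω : Ω) : -(A ω + g ω) = -A ω + ((-g ω : ℝ) : EReal) := by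
      rw [EReal.neg_add (.inr (EReal.coe_ne_top _)) (.inr (EReal.coe_ne_bot _)), EReal.coe_neg,
        sub_eq_add_neg]
    simp_rw [hneg]
    exact lintegral_toENNReal_add_coe_ne_top_iff hg.neg
  by_cases hP : ∫⁻ ω, (A ω).toENNReal ∂μ = ⊤
  · rw [eexp_of_lintegral_eq_top hP, eexp_of_lintegral_eq_top (by simpa [hP] using hPiff),
      EReal.top_add_coe]
  by_cases hN : ∫⁻ ω, (-A ω).toENNReal ∂μ = ⊤
  · rw [eexp_of_lintegral_ne_top hP, eexp_of_lintegral_ne_top (hPiff.2 hP), hN,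
      (by simpa [hN] using hNiff : ∫⁻ ω, (-(A ω + g ω)).toENNReal ∂μ = ⊤),
      EReal.coe_ennreal_top, EReal.sub_top, EReal.sub_top, EReal.bot_add]
  have hfinite : ∀ᵐ ω ∂μ, A ω ≠ ⊤ ∧ A ω ≠ ⊥ := by
    filter_upwards [ae_lt_top' hA.ereal_toENNReal hP, ae_lt_top' hA.neg.ereal_toENNReal hN]
      with ω hP hN
    exact ⟨EReal.toENNReal_ne_top_iff.1 hP.ne, fun h => by simp [h] at hN⟩
  have hAg : AEMeasurable (fun ω => A ω + g ω) μ := hA.add hg.aemeasurable.coe_real_ereal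
  rw [eexp_eq_integral_toReal hAg (hPiff.2 hP) (hNiff.2 hN),
    eexp_eq_integral_toReal hA hP hN, ← EReal.coe_add,
    ← integral_add (integrable_toReal_of_lintegral_toENNReal_ne_top hA hP hN) hg]
  congr 1
  refine integral_congr_ae (hfinite.mono fun ω hω => ?_)
  exact EReal.toReal_add hω.1 hω.2 (EReal.coe_ne_top _) (EReal.coe_ne_bot _)

end ExtendedExpectation

section PullOut

variable {Ω E F G : Type*} {m mΩ : MeasurableSpace Ω} {μ : Measure Ω}
  [NormedAddCommGroup E] [NormedSpace ℝ E] [CompleteSpace E]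
  [NormedAddCommGroup F] [NormedSpace ℝ F]
  [NormedAddCommGroup G] [NormedSpace ℝ G] [CompleteSpace G]

lemma integral_bilin_condExp (B : F →L[ℝ] E →L[ℝ] G) (hm : m ≤ mΩ) [SigmaFinite (μ.trim hm)]
    {f : Ω → F} {g : Ω → E} (hf : StronglyMeasurable[m] f)
    (hfg : Integrable (fun ω => B (f ω) (g ω)) μ) (hg : Integrable g μ) :
    ∫ ω, B (f ω) (μ[g | m] ω) ∂μ = ∫ ω, B (f ω) (g ω) ∂μ := by
  rw [← integral_congr_ae (condExp_bilin_of_stronglyMeasurable_left B hf hfg hg),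
    integral_condExp hm]

end PullOut

noncomputable def dotProductCLM (ι : Type*) [Fintype ι] : (ι → ℝ) →L[ℝ] (ι → ℝ) →L[ℝ] ℝ :=
  LinearMap.toContinuousLinearMap
    (LinearMap.toContinuousLinearMap.toLinearMap ∘ₗ dotProductBilin ℝ ℝ)

lemma dotp_eq_sum_dotProductCLM {T : ℕ} {n : Fin (T + 1) → ℕ} (x y : ∀ t, Fin (n t) → ℝ) :
    dotp x y = ∑ t, dotProductCLM _ (x t) (y t) := rfl

lemma dotp_sub_left {T : ℕ} {n : Fin (T + 1) → ℕ} (x x' y : ∀ t, Fin (n t) → ℝ) :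
    dotp x y - dotp x' y = dotp (x - x') y := by
  simp only [dotp_eq_sum_dotProductCLM, ← Finset.sum_sub_distrib, Pi.sub_apply, map_sub,
    sub_apply]

lemma integrable_dotp_of_bdd_left {T : ℕ} {n : Fin (T + 1) → ℕ} {Ω : Type*} [MeasurableSpace Ω]
    {μ : Measure Ω} {w v : Ω → ∀ t, Fin (n t) → ℝ} (hw : AEStronglyMeasurable w μ) {C : ℝ}
    (hwC : ∀ ω, ‖w ω‖ ≤ C) (hv : Integrable v μ) :
    Integrable (fun ω => dotp (w ω) (v ω)) μ := by
  simp only [dotp_eq_sum_dotProductCLM]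
  refine integrable_finsetSum _ fun t _ => ?_
  exact (dotProductCLM (Fin (n t))).integrable_of_bilin_of_bdd_left C
    ((continuous_apply t).comp_aestronglyMeasurable hw)
    (ae_of_all _ fun ω => (norm_le_pi_norm (w ω) t).trans (hwC ω)) (hv.eval t)

lemma integral_dotp_aproj {T : ℕ} {n : Fin (T + 1) → ℕ} {Ω : Type*} [mΩ : MeasurableSpace Ω]
    {μ : Measure Ω} [IsFiniteMeasure μ] {F : Fin (T + 1) → MeasurableSpace Ω}
    (hF : ∀ t, F t ≤ mΩ) {w v : Ω → ∀ t, Fin (n t) → ℝ}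
    (hw : ∀ t, Measurable[F t] fun ω => w ω t) {C : ℝ} (hwC : ∀ ω, ‖w ω‖ ≤ C)
    (hv : Integrable v μ) :
    ∫ ω, dotp (w ω) (aproj mΩ μ F v ω) ∂μ = ∫ ω, dotp (w ω) (v ω) ∂μ := by
  have hint (t) {u : Ω → Fin (n t) → ℝ} (hu : Integrable u μ) :
      Integrable (fun ω => dotProductCLM (Fin (n t)) (w ω t) (u ω)) μ := by
    have hwt : StronglyMeasurable (fun ω => w ω t) := (hw t).stronglyMeasurable.mono (hF t)
    exact (dotProductCLM (Fin (n t))).integrable_of_bilin_of_bdd_left C hwt.aestronglyMeasurable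
      (ae_of_all _ fun ω => (norm_le_pi_norm (w ω) t).trans (hwC ω)) hu
  have hproj (t) : Integrable (fun ω => aproj mΩ μ F v ω t) μ :=
    integrable_condExp (m := F t) (f := fun ω => v ω t)
  simp only [dotp_eq_sum_dotProductCLM]
  rw [integral_finsetSum _ fun t _ => hint t (hproj t),
    integral_finsetSum _ fun t _ => hint t (hv.eval t)]
  refine Finset.sum_congr rfl fun t _ => ?_
  exact integral_bilin_condExp _ (hF t) (hw t).stronglyMeasurable (hint t (hv.eval t)) (hv.eval t)

theorem stmt11_general {T : ℕ} {n : Fin (T + 1) → ℕ} {Ω : Type*} [mF : MeasurableSpace Ω]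
    (μ : Measure Ω) [IsProbabilityMeasure μ]
    (F : Fin (T + 1) → MeasurableSpace Ω) (hFle : ∀ t, F t ≤ mF)
    (f : (∀ t, Fin (n t) → ℝ) → Ω → EReal)
    (hmeas : Measurable[(inferInstance : MeasurableSpace (∀ t, Fin (n t) → ℝ)).prod mF]
      (Function.uncurry f))
    -- `x ∈ N^∞`: bounded and adapted
    (x : Ω → ∀ t, Fin (n t) → ℝ) (hxadapted : ∀ t, Measurable[F t] fun ω => x ω t)
    (hxbdd : ∃ C : ℝ, ∀ ω, ‖x ω‖ ≤ C)
    -- `v ∈ L¹` is a selection of `∂f(x)`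
    (v : Ω → ∀ t, Fin (n t) → ℝ) (hv : Integrable v μ)
    (hvsel : ∀ᵐ ω ∂μ, ∀ y : ∀ t, Fin (n t) → ℝ,
      f (x ω) ω + ((dotp (fun t => y t - x ω t) (v ω) : ℝ) : EReal) ≤ f y ω) :
    -- subgradient inequality on `N^∞` for the adapted projection `ᵒv`
    ∀ x' : Ω → ∀ t, Fin (n t) → ℝ, (∀ t, Measurable[F t] fun ω => x' ω t) →
      (∃ C : ℝ, ∀ ω, ‖x' ω‖ ≤ C) →
      @eexp Ω mF μ (fun ω => f (x ω) ω)
          + ((∫ ω, dotp (x' ω) (aproj mF μ F v ω) - dotp (x ω) (aproj mF μ F v ω) ∂μ : ℝ)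
              : EReal)
        ≤ @eexp Ω mF μ (fun ω => f (x' ω) ω) := by
  intro x' hx'adapted ⟨C', hx'C⟩
  obtain ⟨C, hxC⟩ := hxbdd
  have hx : Measurable x := measurable_pi_lambda _ fun t => (hxadapted t).mono (hFle t) le_rfl
  have hx' : Measurable x' := measurable_pi_lambda _ fun t => (hx'adapted t).mono (hFle t) le_rfl
  have hstep_adapted (t) : Measurable[F t] fun ω => x' ω t - x ω t :=
    (hx'adapted t).sub (hxadapted t)
  have hstep_bdd (ω) : ‖x' ω - x ω‖ ≤ C' + C :=
    (norm_sub_le _ _).trans (add_le_add (hx'C ω) (hxC ω))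
  have hg : Integrable (fun ω => dotp (x' ω - x ω) (v ω)) μ :=
    integrable_dotp_of_bdd_left (hx'.sub hx).aestronglyMeasurable hstep_bdd hv
  have hfx : AEMeasurable (fun ω => f (x ω) ω) μ :=
    (hmeas.comp (hx.prodMk measurable_id)).aemeasurable
  simp_rw [dotp_sub_left]
  rw [integral_dotp_aproj (w := fun ω => x' ω - x ω) hFle hstep_adapted hstep_bdd hv,
    ← eexp_add_coe hfx hg]
  exact eexp_mono_ae (hvsel.mono fun ω h => h (x' ω))

/-- the adapted projection of an integrable selection of `∂f(x)` is a
subgradient of `Ef` on `N^∞` at `x` for the pairing `⟨N^∞, N¹⟩`. -/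
theorem stmt11 {T : ℕ} {n : Fin (T + 1) → ℕ} {Ω : Type*} [mF : MeasurableSpace Ω]
    (μ : Measure Ω) [IsProbabilityMeasure μ]
    (F : Fin (T + 1) → MeasurableSpace Ω) (hFle : ∀ t, F t ≤ mF) (hFmono : Monotone F)
    (f : (∀ t, Fin (n t) → ℝ) → Ω → EReal)
    (hmeas : Measurable[(inferInstance : MeasurableSpace (∀ t, Fin (n t) → ℝ)).prod mF]
      (Function.uncurry f))
    (hlsc : ∀ ω, LowerSemicontinuous (fun y => f y ω))
    (hconv : ∀ ω, ∀ y z : ∀ t, Fin (n t) → ℝ, ∀ a b : ℝ, 0 ≤ a → 0 ≤ b → a + b = 1 →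
      f (a • y + b • z) ω ≤ (a : EReal) * f y ω + (b : EReal) * f z ω)
    (hproper : ∀ ω, (∃ y, f y ω ≠ ⊤) ∧ ∀ y, f y ω ≠ ⊥)
    -- `x ∈ N^∞`: bounded and adapted
    (x : Ω → ∀ t, Fin (n t) → ℝ) (hxadapted : ∀ t, Measurable[F t] fun ω => x ω t)
    (hxbdd : ∃ C : ℝ, ∀ ω, ‖x ω‖ ≤ C)
    -- `v ∈ L¹` is a selection of `∂f(x)`
    (v : Ω → ∀ t, Fin (n t) → ℝ) (hv : Integrable v μ)
    (hvsel : ∀ᵐ ω ∂μ, ∀ y : ∀ t, Fin (n t) → ℝ,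
      f (x ω) ω + ((dotp (fun t => y t - x ω t) (v ω) : ℝ) : EReal) ≤ f y ω) :
    -- subgradient inequality on `N^∞` for the adapted projection `ᵒv`
    ∀ x' : Ω → ∀ t, Fin (n t) → ℝ, (∀ t, Measurable[F t] fun ω => x' ω t) →
      (∃ C : ℝ, ∀ ω, ‖x' ω‖ ≤ C) →
      @eexp Ω mF μ (fun ω => f (x ω) ω)
          + ((∫ ω, dotp (x' ω) (aproj mF μ F v ω) - dotp (x ω) (aproj mF μ F v ω) ∂μ : ℝ)
              : EReal)
        ≤ @eexp Ω mF μ (fun ω => f (x' ω) ω) :=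
  stmt11_general (mF := mF) μ F hFle f hmeas x hxadapted hxbdd v hv hvsel
end

section
/- Let X be a Banach space, A ⊆ X convex with 0 ∈ A, and φ : X → ℝ∪{±∞} convex with φ(0) finite. Suppose there exist M ∈ ℝ and ε > 0 such that φ(z) ≤ M for all z ∈ aff A with ‖z‖ ≤ ε, where aff dom φ ⊆ aff A and aff A is closed. Then φ is continuous at 0 relative to aff dom φ and hence subdifferentiable at 0: there exists a continuous linear functional v on X with φ(z) ≥ φ(0) + v(z) for all z ∈ X. -/
/-!
On the subspace `Y := aff A` (a linear subspace, as `0 ∈ A`) the function `φ` is never `⊥` and is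
finite near `0`, so `φ` restricted to its domain in `Y` is a real convex function bounded above
on a neighbourhood of `0`. Such a function is continuous at `0`, and separating `(0, φ 0)` from
the interior of its epigraph in `Y × ℝ` yields a subgradient on `Y`, which Hahn–Banach extends
to `X`. Off `Y` the subgradient inequality is trivial because `dom φ ⊆ Y`.
-/

open Filter Set Topology

section RealConvex

variable {E : Type*} [NormedAddCommGroup E] [NormedSpace ℝ E] {s : Set E} {f : E → ℝ} {x₀ : E}
  {M : ℝ}

theorem ConvexOn.continuousAt_of_eventually_le (hf : ConvexOn ℝ s f) (hs : s ∈ 𝓝 x₀)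
    (hM : ∀ᶠ x in 𝓝 x₀, f x ≤ M) : ContinuousAt f x₀ := by
  have hx₀ : x₀ ∈ interior s := mem_interior_iff_mem_nhds.2 hs
  have hbdd : ∃ x ∈ interior s, (𝓝 x).IsBoundedUnder (· ≤ ·) f := ⟨x₀, hx₀, M, hM⟩
  have hcont : ContinuousOn f (interior s) :=
    (((hf.subset interior_subset hf.1.interior).continuousOn_tfae isOpen_interior
      (nonempty_of_mem hx₀)).out 3 1).1 hbdd
  exact hcont.continuousAt (isOpen_interior.mem_nhds hx₀)

theorem ConvexOn.exists_subgradient_of_eventually_le (hf : ConvexOn ℝ s f) (hs : s ∈ 𝓝 x₀)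
    (hM : ∀ᶠ x in 𝓝 x₀, f x ≤ M) : ∃ v : E →L[ℝ] ℝ, ∀ z ∈ s, f x₀ + v (z - x₀) ≤ f z := by
  set epi := {p : E × ℝ | p.1 ∈ s ∧ f p.1 ≤ p.2}
  have hepi : Convex ℝ epi := hf.convex_epigraph
  have hmem_int : ∀ r, M < r → (x₀, r) ∈ interior epi := fun r hr ↦
    mem_interior_iff_mem_nhds.2 <| mem_of_superset
      (prod_mem_nhds (inter_mem hs hM) (Ioi_mem_nhds hr))
      fun p ⟨⟨hp, hpM⟩, hpr⟩ ↦ ⟨hp, hpM.trans hpr.le⟩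
  have hbase : (x₀, f x₀) ∉ interior epi := fun h ↦ by
    obtain ⟨δ, hδ, hball⟩ := Metric.mem_nhds_iff.1 (mem_interior_iff_mem_nhds.1 h)
    have : (x₀, f x₀ - δ / 2) ∈ epi := hball (by simp [Prod.dist_eq, abs_of_pos hδ, hδ])
    linarith [this.2]
  obtain ⟨ℓ, hℓ⟩ := geometric_hahn_banach_open_point hepi.interior isOpen_interior hbase
  -- `ℓ < ℓ (x₀, f x₀)` on the interior, hence `≤` on its closure, which contains `epi`.
  have hℓ_epi : ∀ p ∈ epi, ℓ p ≤ ℓ (x₀, f x₀) := by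
    have hne : (interior epi).Nonempty := ⟨_, hmem_int (M + 1) (lt_add_one M)⟩
    intro p hp
    have hcl : p ∈ closure (interior epi) := by
      rw [hepi.closure_interior_eq_closure_of_nonempty_interior hne]
      exact subset_closure hp
    exact closure_minimal (fun q hq ↦ (hℓ q hq).le)
      (isClosed_le ℓ.continuous continuous_const) hcl
  set β := ℓ (0, 1)
  have hsplit : ∀ x r, ℓ (x, r) = ℓ (x, 0) + r * β := fun x r ↦ by
    rw [← smul_eq_mul, ← map_smul, ← map_add]; simp
  have hβ : β < 0 := by
    set r := max M (f x₀) + 1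
    have := hℓ _ (hmem_int r (by linarith [le_max_left M (f x₀)]))
    rw [hsplit x₀ r, hsplit x₀ (f x₀)] at this
    nlinarith [le_max_right M (f x₀)]
  refine ⟨(-β)⁻¹ • ℓ.comp (ContinuousLinearMap.inl ℝ E ℝ), fun z hz ↦ ?_⟩
  have hz_epi := hℓ_epi (z, f z) ⟨hz, le_rfl⟩
  rw [hsplit z, hsplit x₀] at hz_epi
  have hsub : ℓ (z - x₀, 0) = ℓ (z, 0) - ℓ (x₀, 0) := by rw [← map_sub]; simp
  have hv : ((-β)⁻¹ • ℓ.comp (ContinuousLinearMap.inl ℝ E ℝ)) (z - x₀)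
      = (-β)⁻¹ * (ℓ (z, 0) - ℓ (x₀, 0)) := by simp [hsub]
  rw [hv, ← le_sub_iff_add_le', inv_mul_le_iff₀ (neg_pos.2 hβ)]
  nlinarith

end RealConvex

section ERealConvex

variable {E F : Type*}

def ConvexEReal [AddCommGroup E] [Module ℝ E] (ψ : E → EReal) : Prop :=
  ∀ x y : E, ∀ a b : ℝ, 0 ≤ a → 0 ≤ b → a + b = 1 →
    ψ (a • x + b • y) ≤ (a : EReal) * ψ x + (b : EReal) * ψ y

namespace ConvexEReal

section Module

variable [AddCommGroup E] [Module ℝ E] [AddCommGroup F] [Module ℝ F] {ψ : E → EReal}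

theorem comp_linearMap (hψ : ConvexEReal ψ) (L : F →ₗ[ℝ] E) : ConvexEReal (ψ ∘ L) :=
  fun x y a b ha hb hab ↦ by simpa using hψ (L x) (L y) a b ha hb hab

theorem ne_bot (hψ : ConvexEReal ψ) {x₀ : E} (h : ψ x₀ ≠ ⊥) (x : E) : ψ x ≠ ⊥ := by
  intro hx
  -- `x₀` is the midpoint of `x` and `2 x₀ - x`, and `⊥ + ⊤ = ⊥` in `EReal`.
  have hmid : (1 / 2 : ℝ) • x + (1 / 2 : ℝ) • ((2 : ℝ) • x₀ - x) = x₀ := by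
    rw [smul_sub, smul_smul, ← add_sub_assoc, add_sub_cancel_left]; norm_num
  have := hψ x ((2 : ℝ) • x₀ - x) (1 / 2) (1 / 2) (by norm_num) (by norm_num) (by norm_num)
  rw [hmid, hx, EReal.coe_mul_bot_of_pos (by norm_num), EReal.bot_add] at this
  exact h (le_bot_iff.1 this)

theorem convexOn_toReal (hψ : ConvexEReal ψ) (hbot : ∀ x, ψ x ≠ ⊥) :
    ConvexOn ℝ {x | ψ x ≠ ⊤} fun x ↦ (ψ x).toReal := by
  have key : ∀ ⦃x⦄, ψ x ≠ ⊤ → ∀ ⦃y⦄, ψ y ≠ ⊤ → ∀ ⦃a b : ℝ⦄, 0 ≤ a → 0 ≤ b → a + b = 1 →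
      ψ (a • x + b • y) ≤ ((a * (ψ x).toReal + b * (ψ y).toReal : ℝ) : EReal) := by
    intro x hx y hy a b ha hb hab
    simpa [EReal.coe_toReal hx (hbot x), EReal.coe_toReal hy (hbot y)] using
      hψ x y a b ha hb hab
  refine ⟨fun x hx y hy a b ha hb hab ↦ ne_top_of_le_ne_top (EReal.coe_ne_top _)
    (key hx hy ha hb hab), fun x hx y hy a b ha hb hab ↦ ?_⟩
  have := EReal.toReal_le_toReal (key hx hy ha hb hab) (hbot _) (EReal.coe_ne_top _)
  rwa [EReal.toReal_coe] at this

end Module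

variable [NormedAddCommGroup E] [NormedSpace ℝ E] {ψ : E → EReal} {x₀ : E} {M : ℝ}

theorem tendsto_nhds (hψ : ConvexEReal ψ) (htop : ψ x₀ ≠ ⊤) (hbot : ψ x₀ ≠ ⊥)
    (hM : ∀ᶠ x in 𝓝 x₀, ψ x ≤ M) : Tendsto ψ (𝓝 x₀) (𝓝 (ψ x₀)) := by
  have hbot' := hψ.ne_bot hbot
  have hdom : ∀ᶠ x in 𝓝 x₀, ψ x ≠ ⊤ :=
    hM.mono fun x hx ↦ ne_top_of_le_ne_top (EReal.coe_ne_top M) hx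
  have hfM : ∀ᶠ x in 𝓝 x₀, (ψ x).toReal ≤ M :=
    hM.mono fun x hx ↦ by simpa using EReal.toReal_le_toReal hx (hbot' x) (EReal.coe_ne_top M)
  have hcont := (hψ.convexOn_toReal hbot').continuousAt_of_eventually_le hdom hfM
  rw [← EReal.coe_toReal htop hbot]
  refine (continuous_coe_real_ereal.continuousAt.tendsto.comp hcont).congr' ?_
  exact hdom.mono fun x hx ↦ EReal.coe_toReal hx (hbot' x)

theorem exists_subgradient (hψ : ConvexEReal ψ) (htop : ψ x₀ ≠ ⊤) (hbot : ψ x₀ ≠ ⊥)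
    (hM : ∀ᶠ x in 𝓝 x₀, ψ x ≤ M) : ∃ v : E →L[ℝ] ℝ, ∀ z, ψ x₀ + v (z - x₀) ≤ ψ z := by
  have hbot' := hψ.ne_bot hbot
  have hdom : ∀ᶠ x in 𝓝 x₀, ψ x ≠ ⊤ :=
    hM.mono fun x hx ↦ ne_top_of_le_ne_top (EReal.coe_ne_top M) hx
  have hfM : ∀ᶠ x in 𝓝 x₀, (ψ x).toReal ≤ M :=
    hM.mono fun x hx ↦ by simpa using EReal.toReal_le_toReal hx (hbot' x) (EReal.coe_ne_top M)
  obtain ⟨v, hv⟩ := (hψ.convexOn_toReal hbot').exists_subgradient_of_eventually_le hdom hfM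
  refine ⟨v, fun z ↦ ?_⟩
  by_cases hz : ψ z = ⊤
  · simp [hz]
  rw [← EReal.coe_toReal htop hbot, ← EReal.coe_toReal hz (hbot' z), ← EReal.coe_add]
  exact EReal.coe_le_coe_iff.2 (hv z hz)

end ConvexEReal

end ERealConvex

theorem stmt15_general {X : Type*} [NormedAddCommGroup X] [NormedSpace ℝ X]
    (A : Set X) (h0A : (0 : X) ∈ A)
    (φ : X → EReal)
    (hconv : ∀ x y : X, ∀ a b : ℝ, 0 ≤ a → 0 ≤ b → a + b = 1 →
      φ (a • x + b • y) ≤ (a : EReal) * φ x + (b : EReal) * φ y)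
    (hfin : φ 0 ≠ ⊤ ∧ φ 0 ≠ ⊥)
    (M ε : ℝ) (hε : 0 < ε)
    (hbdd : ∀ z ∈ (affineSpan ℝ A : Set X), ‖z‖ ≤ ε → φ z ≤ (M : EReal))
    (hdom : (affineSpan ℝ {x : X | φ x ≠ ⊤} : Set X) ⊆ (affineSpan ℝ A : Set X)) :
    Filter.Tendsto φ (nhdsWithin 0 (affineSpan ℝ {x : X | φ x ≠ ⊤} : Set X)) (nhds (φ 0)) ∧
      ∃ v : X →L[ℝ] ℝ, ∀ z : X, φ 0 + ((v z : ℝ) : EReal) ≤ φ z := by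
  set Y := (affineSpan ℝ A).direction
  have hY : (affineSpan ℝ A : Set X) = Y := by
    rw [← AffineSubspace.direction_eq_self_iff_zero_mem.2 (subset_affineSpan ℝ A h0A)]
    rfl
  rw [hY] at hbdd hdom
  have hψ : ConvexEReal (φ ∘ Y.subtype) := ConvexEReal.comp_linearMap hconv Y.subtype
  have hM : ∀ᶠ y in 𝓝 (0 : Y), (φ ∘ Y.subtype) y ≤ M :=
    mem_of_superset (Metric.closedBall_mem_nhds 0 hε) fun y hy ↦
      hbdd y y.2 (by simpa using hy)
  constructor
  · have hT : Tendsto φ (𝓝[(Y : Set X)] 0) (𝓝 (φ 0)) := by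
      rw [nhdsWithin_eq_map_subtype_coe Y.zero_mem, tendsto_map'_iff]
      exact hψ.tendsto_nhds hfin.1 hfin.2 hM
    exact hT.mono_left (nhdsWithin_mono 0 hdom)
  · obtain ⟨v₀, hv₀⟩ := hψ.exists_subgradient (x₀ := 0) (by simpa using hfin.1)
      (by simpa using hfin.2) hM
    obtain ⟨v, hv, -⟩ := exists_extension_norm_eq Y v₀
    refine ⟨v, fun z ↦ ?_⟩
    by_cases hz : φ z = ⊤
    · simp [hz]
    have hzY : z ∈ Y := hdom (subset_affineSpan ℝ _ hz)
    rw [show v z = v₀ ⟨z, hzY⟩ from hv ⟨z, hzY⟩]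
    simpa using hv₀ ⟨z, hzY⟩

/-- A convex extended-real function on a Banach space, finite at `0`,
bounded above near `0` relative to a closed affine hull containing `aff dom φ`,
is continuous at `0` relative to `aff dom φ` and subdifferentiable at `0`. -/
theorem stmt15 {X : Type*} [NormedAddCommGroup X] [NormedSpace ℝ X] [CompleteSpace X]
    (A : Set X) (hA : Convex ℝ A) (h0A : (0 : X) ∈ A)
    (φ : X → EReal)
    (hconv : ∀ x y : X, ∀ a b : ℝ, 0 ≤ a → 0 ≤ b → a + b = 1 →
      φ (a • x + b • y) ≤ (a : EReal) * φ x + (b : EReal) * φ y)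
    (hfin : φ 0 ≠ ⊤ ∧ φ 0 ≠ ⊥)
    (M ε : ℝ) (hε : 0 < ε)
    (hbdd : ∀ z ∈ (affineSpan ℝ A : Set X), ‖z‖ ≤ ε → φ z ≤ (M : EReal))
    (hdom : (affineSpan ℝ {x : X | φ x ≠ ⊤} : Set X) ⊆ (affineSpan ℝ A : Set X))
    (hclosed : IsClosed (affineSpan ℝ A : Set X)) :
    Filter.Tendsto φ (nhdsWithin 0 (affineSpan ℝ {x : X | φ x ≠ ⊤} : Set X)) (nhds (φ 0)) ∧
      ∃ v : X →L[ℝ] ℝ, ∀ z : X, φ 0 + ((v z : ℝ) : EReal) ≤ φ z :=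
  stmt15_general A h0A φ hconv hfin M ε hε hbdd hdom
end
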